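/- arXiv:1103.5599 — 5 statements merged into one kernel-verified Lean document; each statement's English description precedes it below -/
import Mathlib

section
/- Let G = (V,E) be a finite simple graph admitting a k-completion, suppose G is sunflower-reduced, suppose every set of pairwise true twins of G has at most k + 1 vertices, and suppose every clean K-join of G has at most 2(k + 1) vertices. Then every K-join of G has at most k^3 + 4k^2 + 7k + 3 vertices. -/
open SimpleGraph Finset

variable {V : Type*}

/-- `f` is an (injective, hence linear) umbrella ordering of the graph `G`. -/
def IsUmbrellaOrdering (G : SimpleGraph V) (f : V → ℕ) : Prop :=
  Function.Injective f ∧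
    ∀ u v w : V, f u < f v → f v < f w → G.Adj u w → G.Adj u v ∧ G.Adj v w

/-- A graph is a proper interval graph iff it admits an umbrella ordering. -/
def IsProperIntervalGraph (G : SimpleGraph V) : Prop :=
  ∃ f : V → ℕ, IsUmbrellaOrdering G f

/-- The graph `G + F` obtained by adding the set `F` of pairs as edges. -/
def addEdges (G : SimpleGraph V) (F : Finset (Sym2 V)) : SimpleGraph V :=
  G ⊔ SimpleGraph.fromEdgeSet ↑F

/-- `F` is a completion of `G`: a set of non-loop non-edges whose addition
makes `G` a proper interval graph. -/
def IsCompletion (G : SimpleGraph V) (F : Finset (Sym2 V)) : Prop :=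
  (∀ e ∈ F, ¬ e.IsDiag) ∧ (∀ e ∈ F, e ∉ G.edgeSet) ∧
    IsProperIntervalGraph (addEdges G F)

/-- `F` is a `k`-completion of `G`. -/
def IsKCompletion (G : SimpleGraph V) (k : ℕ) (F : Finset (Sym2 V)) : Prop :=
  IsCompletion G F ∧ F.card ≤ k

/-- `uv` is an extremal edge of `G` with respect to the ordering `f`. -/
def IsExtremalEdge (G : SimpleGraph V) (f : V → ℕ) (u v : V) : Prop :=
  G.Adj u v ∧ f u < f v ∧
    ∀ u' v' : V, G.Adj u' v' → f u' ≤ f u → f v ≤ f v' → u' = u ∧ v' = v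

/-- `c` is the center and `l₁, l₂, l₃` the leaves of an induced claw of `G`. -/
def IsClaw (G : SimpleGraph V) (c l₁ l₂ l₃ : V) : Prop :=
  G.Adj c l₁ ∧ G.Adj c l₂ ∧ G.Adj c l₃ ∧
    ¬ G.Adj l₁ l₂ ∧ ¬ G.Adj l₁ l₃ ∧ ¬ G.Adj l₂ l₃ ∧ l₁ ≠ l₂ ∧ l₁ ≠ l₃ ∧ l₂ ≠ l₃

/-- `a b c d` is an induced 4-cycle of `G` (in this cyclic order). -/
def IsInducedC4 (G : SimpleGraph V) (a b c d : V) : Prop :=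
  G.Adj a b ∧ G.Adj b c ∧ G.Adj c d ∧ G.Adj d a ∧
    ¬ G.Adj a c ∧ ¬ G.Adj b d ∧ a ≠ c ∧ b ≠ d

/-- `x` belongs to some claw of `G` (as center or leaf). -/
def InClaw (G : SimpleGraph V) (x : V) : Prop :=
  ∃ a b c d, IsClaw G a b c d ∧ (x = a ∨ x = b ∨ x = c ∨ x = d)

/-- `x` belongs to some induced 4-cycle of `G`. -/
def InC4 (G : SimpleGraph V) (x : V) : Prop :=
  ∃ a b c d, IsInducedC4 G a b c d ∧ (x = a ∨ x = b ∨ x = c ∨ x = d)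

/-- `{x, y, z}` is an independent set of size 3 (a `3K₁`) of `G`. -/
def IsInd3 (G : SimpleGraph V) (x y z : V) : Prop :=
  x ≠ y ∧ x ≠ z ∧ y ≠ z ∧ ¬ G.Adj x y ∧ ¬ G.Adj x z ∧ ¬ G.Adj y z

/-- `x` belongs to some independent set of size 3 of `G`. -/
def InInd3 (G : SimpleGraph V) (x : V) : Prop := ∃ y z, IsInd3 G x y z

/-- `G` is sunflower-reduced (for the parameter `k`). -/
def SunflowerReduced (G : SimpleGraph V) (k : ℕ) : Prop :=
  ∀ u v : V, u ≠ v → ¬ G.Adj u v →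
    {w : V | ∃ c, IsClaw G c u v w}.ncard ≤ k ∧
    {e : Sym2 V | ∃ a b, e = s(a, b) ∧ IsInducedC4 G u a v b}.ncard ≤ k

/-- `u` and `v` are true twins of `G`: they have the same closed neighborhood. -/
def TrueTwins (G : SimpleGraph V) (u v : V) : Prop :=
  insert u (G.neighborSet u) = insert v (G.neighborSet v)

/-- `b : Fin p → V` enumerates a `K`-join of `G` whose complement is
partitioned into `N`, `L`, `R`, `C`. -/
structure KJoinWith (G : SimpleGraph V) {p : ℕ} (b : Fin p → V)
    (N L R C : Set V) : Prop where
  inj : Function.Injective b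
  clique : ∀ i j : Fin p, i ≠ j → G.Adj (b i) (b j)
  cover : ∀ v : V, v ∉ Set.range b → v ∈ N ∪ L ∪ R ∪ C
  disj : List.Pairwise Disjoint [Set.range b, N, L, R, C]
  nAdj : ∀ v ∈ N, ∀ i, G.Adj v (b i)
  cNotAdj : ∀ v ∈ C, ∀ i, ¬ G.Adj v (b i)
  lrAdj : ∀ v ∈ L ∪ R, ∃ i, G.Adj v (b i)
  lrNotAll : ∀ v ∈ L ∪ R, ∃ i, ¬ G.Adj v (b i)
  rFirst : ∀ r ∈ R, ∀ i : Fin p, i.val = 0 → ¬ G.Adj r (b i)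
  lLast : ∀ x ∈ L, ∀ i : Fin p, i.val = p - 1 → ¬ G.Adj x (b i)
  rMono : ∀ i j : Fin p, i.val + 1 = j.val → ∀ r ∈ R, G.Adj (b i) r → G.Adj (b j) r
  lMono : ∀ i j : Fin p, i.val + 1 = j.val → ∀ x ∈ L, G.Adj (b j) x → G.Adj (b i) x

/-- `B ⊆ V` is a `K`-join of `G`. -/
def IsKJoin (G : SimpleGraph V) (B : Set V) : Prop :=
  ∃ (p : ℕ) (b : Fin p → V) (N L R C : Set V),
    Set.range b = B ∧ KJoinWith G b N L R C

/-- `B` is a clean `K`-join: none of its vertices belongs to a claw or an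
induced 4-cycle of `G`. -/
def IsCleanKJoin (G : SimpleGraph V) (B : Set V) : Prop :=
  IsKJoin G B ∧ ∀ x ∈ B, ¬ InClaw G x ∧ ¬ InC4 G x

/-- `B ⊆ V` is a simple `K`-join of `G` (one of `L`, `R` is empty). -/
def IsSimpleKJoin (G : SimpleGraph V) (B : Set V) : Prop :=
  ∃ (p : ℕ) (b : Fin p → V) (N L R C : Set V),
    Set.range b = B ∧ KJoinWith G b N L R C ∧ (L = ∅ ∨ R = ∅)

/-- `B` is bcc-clean: none of its vertices belongs to a `3K₁` or an induced
4-cycle of `G`. -/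
def IsBccClean (G : SimpleGraph V) (B : Set V) : Prop :=
  ∀ x ∈ B, ¬ InInd3 G x ∧ ¬ InC4 G x

/-- `b : Fin p → V` enumerates (in umbrella order) a 1-branch of `G` with
complement partitioned into `R`, `C`; `b l` is the neighbor of the last
vertex `b (p-1)` of minimal index.  The attachment clique is
`B₁ = {b i : l ≤ i}` and `B^R = {b i : i < l}`. -/
structure OneBranch (G : SimpleGraph V) {p : ℕ} (b : Fin p → V)
    (R C : Set V) (l : Fin p) : Prop where
  pos : 0 < p
  inj : Function.Injective b
  umbrella : ∀ i j m : Fin p, i < j → j < m → G.Adj (b i) (b m) →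
    G.Adj (b i) (b j) ∧ G.Adj (b j) (b m)
  connB : (G.induce (Set.range b)).Connected
  cover : ∀ v : V, v ∉ Set.range b → v ∈ R ∪ C
  disj : List.Pairwise Disjoint [Set.range b, R, C]
  noBC : ∀ v ∈ C, ∀ i, ¬ G.Adj v (b i)
  rNbr : ∀ v ∈ R, ∃ i, G.Adj v (b i)
  lMin : ∀ j : Fin p, j < l → ¬ G.Adj (b j) (b ⟨p - 1, Nat.sub_lt pos Nat.one_pos⟩)
  lNbr : l.val = p - 1 ∨ G.Adj (b l) (b ⟨p - 1, Nat.sub_lt pos Nat.one_pos⟩)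
  noEarlyR : ∀ j : Fin p, j < l → ∀ r ∈ R, ¬ G.Adj r (b j)
  rMono : ∀ i j : Fin p, l ≤ i → i.val + 1 = j.val → ∀ r ∈ R,
    G.Adj (b i) r → G.Adj (b j) r

/-- `b : Fin p → V` enumerates (in umbrella order) a 2-branch of `G` with
complement partitioned into `L`, `R`, `C`; `b l` is the neighbor of `b (p-1)`
of minimal index and `b l'` is the neighbor of `b 0` of maximal index.  The
attachment cliques are `B₁ = {b i : i ≤ l'}` and `B₂ = {b i : l ≤ i}`, and
`B^R = {b i : l' < i < l}`. -/
structure TwoBranch (G : SimpleGraph V) {p : ℕ} (b : Fin p → V)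
    (L R C : Set V) (l l' : Fin p) : Prop where
  pos : 0 < p
  inj : Function.Injective b
  umbrella : ∀ i j m : Fin p, i < j → j < m → G.Adj (b i) (b m) →
    G.Adj (b i) (b j) ∧ G.Adj (b j) (b m)
  connB : (G.induce (Set.range b)).Connected
  cover : ∀ v : V, v ∉ Set.range b → v ∈ L ∪ R ∪ C
  disj : List.Pairwise Disjoint [Set.range b, L, R, C]
  noBC : ∀ v ∈ C, ∀ i, ¬ G.Adj v (b i)
  lNbrEx : ∀ v ∈ L, ∃ i, G.Adj v (b i)
  rNbrEx : ∀ v ∈ R, ∃ i, G.Adj v (b i)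
  lMin : ∀ j : Fin p, j < l → ¬ G.Adj (b j) (b ⟨p - 1, Nat.sub_lt pos Nat.one_pos⟩)
  lNbr : l.val = p - 1 ∨ G.Adj (b l) (b ⟨p - 1, Nat.sub_lt pos Nat.one_pos⟩)
  lMax' : ∀ j : Fin p, l' < j → ¬ G.Adj (b ⟨0, pos⟩) (b j)
  lNbr' : l'.val = 0 ∨ G.Adj (b ⟨0, pos⟩) (b l')
  noEarlyR : ∀ j : Fin p, j < l → ∀ r ∈ R, ¬ G.Adj r (b j)
  noLateL : ∀ j : Fin p, l' < j → ∀ v ∈ L, ¬ G.Adj v (b j)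
  rMono : ∀ i j : Fin p, l ≤ i → i.val + 1 = j.val → ∀ r ∈ R,
    G.Adj (b i) r → G.Adj (b j) r
  lMono : ∀ i j : Fin p, j ≤ l' → i.val + 1 = j.val → ∀ v ∈ L,
    G.Adj (b j) v → G.Adj (b i) v

/-- `e : Fin q → Fin p` lists the last indices of the `q` K-joins of the
K-join decomposition of the 2-branch enumerated by `b` (with attachment
cliques ending at `l'` resp. starting at `l`). -/
def KJoinDecomp (G : SimpleGraph V) {p : ℕ} (b : Fin p → V) (l l' : Fin p)
    (q : ℕ) (e : Fin q → Fin p) : Prop :=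
  0 < q ∧
  (∀ i : Fin q, i.val = 0 → e i = l') ∧
  (∀ i : Fin q, i.val = q - 1 → (e i).val = p - 1) ∧
  StrictMono e ∧
  ∀ i j : Fin q, i.val + 1 = j.val →
    ∃ hs : (e i).val + 1 < p,
      (j.val + 1 < q →
        (⟨(e i).val + 1, hs⟩ : Fin p) < l ∧
        G.Adj (b ⟨(e i).val + 1, hs⟩) (b (e j)) ∧
        ∀ m : Fin p, G.Adj (b ⟨(e i).val + 1, hs⟩) (b m) → m ≤ e j) ∧
      (j.val + 1 = q → l ≤ (⟨(e i).val + 1, hs⟩ : Fin p))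

/-- `G` is a bi-clique chain graph: two cliques joined by a join. -/
def IsBicliqueChain (G : SimpleGraph V) : Prop :=
  ∃ (q : ℕ) (x : Fin q → V) (Y : Set V),
    Function.Injective x ∧
    Disjoint (Set.range x) Y ∧
    (∀ v : V, v ∈ Set.range x ∨ v ∈ Y) ∧
    (∀ i j : Fin q, i ≠ j → G.Adj (x i) (x j)) ∧
    G.IsClique Y ∧
    (∀ i j : Fin q, i ≤ j → ∀ y ∈ Y, G.Adj (x i) y → G.Adj (x j) y)

/-- `F` is a bcc-`k`-completion of `G`. -/
def IsBccKCompletion (G : SimpleGraph V) (k : ℕ) (F : Finset (Sym2 V)) : Prop :=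
  (∀ e ∈ F, ¬ e.IsDiag) ∧ (∀ e ∈ F, e ∉ G.edgeSet) ∧ F.card ≤ k ∧
    IsBicliqueChain (addEdges G F)


/-! ### Auxiliary lemmas -/

section Aux

variable {G : SimpleGraph V} {c a b d x y u v w : V}

lemma addEdges_adj (G : SimpleGraph V) (F : Finset (Sym2 V)) (x y : V) :
    (addEdges G F).Adj x y ↔ G.Adj x y ∨ (s(x, y) ∈ F ∧ x ≠ y) := by
  simp [addEdges, SimpleGraph.fromEdgeSet_adj]

lemma IsClaw.swap12 (h : IsClaw G c a b d) : IsClaw G c b a d := by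
  obtain ⟨h1, h2, h3, h4, h5, h6, n1, n2, n3⟩ := h
  exact ⟨h2, h1, h3, fun hh => h4 hh.symm, h6, h5, n1.symm, n3, n2⟩

lemma IsClaw.swap23 (h : IsClaw G c a b d) : IsClaw G c a d b := by
  obtain ⟨h1, h2, h3, h4, h5, h6, n1, n2, n3⟩ := h
  exact ⟨h1, h3, h2, h5, h4, fun hh => h6 hh.symm, n2, n1, n3.symm⟩

lemma IsClaw.rotl (h : IsClaw G c a b d) : IsClaw G c b d a :=
  h.swap12.swap23

lemma IsInducedC4.rot (h : IsInducedC4 G a b c d) : IsInducedC4 G b c d a := by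
  obtain ⟨h1, h2, h3, h4, h5, h6, n1, n2⟩ := h
  exact ⟨h2, h3, h4, h1, h6, fun hh => h5 hh.symm, n2, n1.symm⟩

lemma IsInducedC4.swapDiag (h : IsInducedC4 G a b c d) : IsInducedC4 G c b a d := by
  obtain ⟨h1, h2, h3, h4, h5, h6, n1, n2⟩ := h
  exact ⟨h2.symm, h1.symm, h4.symm, h3.symm, fun hh => h5 hh.symm, h6, n1.symm, n2⟩

lemma umbrella_no_claw {H : SimpleGraph V} {f : V → ℕ} (hf : IsUmbrellaOrdering H f) :
    ∀ c a b d : V, ¬ IsClaw H c a b d := by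
  obtain ⟨hinj, humb⟩ := hf
  -- helper for two leaves on the same side
  have low : ∀ c a b : V, ¬ H.Adj a b → H.Adj c a → H.Adj c b → a ≠ b →
      f a < f c → f b < f c → False := by
    intro c a b hab hca hcb hne ha hb
    rcases lt_or_gt_of_ne (fun h => hne (hinj h)) with h | h
    · exact hab (humb a b c h hb hca.symm).1
    · exact hab ((humb b a c h ha hcb.symm).1).symm
  have high : ∀ c a b : V, ¬ H.Adj a b → H.Adj c a → H.Adj c b → a ≠ b →
      f c < f a → f c < f b → False := by
    intro c a b hab hca hcb hne ha hb
    rcases lt_or_gt_of_ne (fun h => hne (hinj h)) with h | h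
    · exact hab (humb c a b ha h hcb).2
    · exact hab ((humb c b a hb h hca).2).symm
  intro c a b d h
  obtain ⟨h1, h2, h3, h4, h5, h6, n1, n2, n3⟩ := h
  have fa : f a ≠ f c := fun h => h1.ne' (hinj h)
  have fb : f b ≠ f c := fun h => h2.ne' (hinj h)
  have fd : f d ≠ f c := fun h => h3.ne' (hinj h)
  rcases lt_or_gt_of_ne fa with ha | ha <;>
  rcases lt_or_gt_of_ne fb with hb | hb <;>
  rcases lt_or_gt_of_ne fd with hd | hd
  · exact low c a b h4 h1 h2 n1 ha hb
  · exact low c a b h4 h1 h2 n1 ha hb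
  · exact low c a d h5 h1 h3 n2 ha hd
  · exact high c b d h6 h2 h3 n3 hb hd
  · exact low c b d h6 h2 h3 n3 hb hd
  · exact high c a d h5 h1 h3 n2 ha hd
  · exact high c a b h4 h1 h2 n1 ha hb
  · exact high c a b h4 h1 h2 n1 ha hb

lemma umbrella_no_c4 {H : SimpleGraph V} {f : V → ℕ} (hf : IsUmbrellaOrdering H f) :
    ∀ a b c d : V, ¬ IsInducedC4 H a b c d := by
  obtain ⟨hinj, humb⟩ := hf
  have base : ∀ a b c d : V, IsInducedC4 H a b c d →
      f a < f b → f a < f c → f a < f d → False := by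
    intro a b c d h hab hac had
    obtain ⟨h1, h2, h3, h4, h5, h6, n1, n2⟩ := h
    have hbc : f b < f c := by
      rcases lt_or_gt_of_ne (fun hh => h2.ne (hinj hh)) with hh | hh
      · exact hh
      · exact absurd (humb a c b hac hh h1).1 h5
    have hdc : f d < f c := by
      rcases lt_or_gt_of_ne (fun hh => h3.ne' (hinj hh)) with hh | hh
      · exact hh
      · exact absurd (humb a c d hac hh h4.symm).1 h5
    rcases lt_or_gt_of_ne (fun hh => n2 (hinj hh)) with hh | hh
    · exact absurd (humb b d c hh hdc h2).1 h6
    · exact absurd (humb d b c hh hbc h3.symm).1 (fun hx => h6 hx.symm)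
  intro a b c d h
  have ne1 : f a ≠ f b := fun hh => h.1.ne (hinj hh)
  have ne2 : f a ≠ f c := fun hh => h.2.2.2.2.2.2.1 (hinj hh)
  have ne3 : f a ≠ f d := fun hh => h.2.2.2.1.ne' (hinj hh)
  have ne4 : f b ≠ f c := fun hh => h.2.1.ne (hinj hh)
  have ne5 : f b ≠ f d := fun hh => h.2.2.2.2.2.2.2 (hinj hh)
  have ne6 : f c ≠ f d := fun hh => h.2.2.1.ne (hinj hh)
  have hr1 := h.rot
  have hr2 := h.rot.rot
  have hr3 := h.rot.rot.rot
  rcases lt_or_gt_of_ne ne1 with c1 | c1 <;>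
  rcases lt_or_gt_of_ne ne2 with c2 | c2 <;>
  rcases lt_or_gt_of_ne ne3 with c3 | c3 <;>
  rcases lt_or_gt_of_ne ne4 with c4 | c4 <;>
  rcases lt_or_gt_of_ne ne5 with c5 | c5 <;>
  rcases lt_or_gt_of_ne ne6 with c6 | c6 <;>
  first
    | exact base a b c d h c1 c2 c3
    | exact base b c d a hr1 c4 c5 (by omega)
    | exact base c d a b hr2 c6 (by omega) (by omega)
    | exact base d a b c hr3 (by omega) (by omega) (by omega)
    | omega

lemma claw_pair_mem {F : Finset (Sym2 V)} (hF : IsCompletion G F)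
    (h : IsClaw G c a b d) : s(a, b) ∈ F ∨ s(a, d) ∈ F ∨ s(b, d) ∈ F := by
  by_contra hc
  push_neg at hc
  obtain ⟨hc1, hc2, hc3⟩ := hc
  obtain ⟨f, hf⟩ := hF.2.2
  obtain ⟨h1, h2, h3, h4, h5, h6, n1, n2, n3⟩ := h
  have hadj : ∀ x y : V, G.Adj x y → (addEdges G F).Adj x y := fun x y hh =>
    (addEdges_adj G F x y).2 (Or.inl hh)
  have hnadj : ∀ x y : V, ¬ G.Adj x y → s(x, y) ∉ F → ¬ (addEdges G F).Adj x y := by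
    intro x y hxy hm hh
    rcases (addEdges_adj G F x y).1 hh with hh | ⟨hh, _⟩
    · exact hxy hh
    · exact hm hh
  exact umbrella_no_claw hf c a b d
    ⟨hadj _ _ h1, hadj _ _ h2, hadj _ _ h3, hnadj _ _ h4 hc1, hnadj _ _ h5 hc2,
      hnadj _ _ h6 hc3, n1, n2, n3⟩

lemma c4_diag_mem {F : Finset (Sym2 V)} (hF : IsCompletion G F)
    (h : IsInducedC4 G a b c d) : s(a, c) ∈ F ∨ s(b, d) ∈ F := by
  by_contra hc
  push_neg at hc
  obtain ⟨hc1, hc2⟩ := hc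
  obtain ⟨f, hf⟩ := hF.2.2
  obtain ⟨h1, h2, h3, h4, h5, h6, n1, n2⟩ := h
  have hadj : ∀ x y : V, G.Adj x y → (addEdges G F).Adj x y := fun x y hh =>
    (addEdges_adj G F x y).2 (Or.inl hh)
  have hnadj : ∀ x y : V, ¬ G.Adj x y → s(x, y) ∉ F → ¬ (addEdges G F).Adj x y := by
    intro x y hxy hm hh
    rcases (addEdges_adj G F x y).1 hh with hh | ⟨hh, _⟩
    · exact hxy hh
    · exact hm hh
  exact umbrella_no_c4 hf a b c d
    ⟨hadj _ _ h1, hadj _ _ h2, hadj _ _ h3, hadj _ _ h4, hnadj _ _ h5 hc1,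
      hnadj _ _ h6 hc2, n1, n2⟩

lemma KJoinWith.adj_R_mono {p : ℕ} {b : Fin p → V} {N L R C : Set V}
    (kj : KJoinWith G b N L R C) {r : V} (hr : r ∈ R) {i j : Fin p}
    (hij : i ≤ j) (h : G.Adj (b i) r) : G.Adj (b j) r := by
  have key : ∀ n : ℕ, ∀ i : Fin p, i.val + n = j.val → G.Adj (b i) r → G.Adj (b j) r := by
    intro n
    induction n with
    | zero => intro i hn h; rwa [show j = i from Fin.ext (by omega)]
    | succ n ih =>
      intro i hn h
      have hi1 : i.val + 1 < p := by omega
      exact ih ⟨i.val + 1, hi1⟩ (show i.val + 1 + n = j.val by omega)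
        (kj.rMono i ⟨i.val + 1, hi1⟩ rfl r hr h)
  exact key (j.val - i.val) i (by omega) h

lemma KJoinWith.adj_L_mono {p : ℕ} {b : Fin p → V} {N L R C : Set V}
    (kj : KJoinWith G b N L R C) {x : V} (hx : x ∈ L) {i j : Fin p}
    (hij : i ≤ j) (h : G.Adj (b j) x) : G.Adj (b i) x := by
  have key : ∀ n : ℕ, ∀ i : Fin p, i.val + n = j.val → G.Adj (b i) x := by
    intro n
    induction n with
    | zero => intro i hn; rwa [show j = i from Fin.ext (by omega)] at h
    | succ n ih =>
      intro i hn
      have hi1 : i.val + 1 < p := by omega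
      exact kj.lMono i ⟨i.val + 1, hi1⟩ rfl x hx
        (ih ⟨i.val + 1, hi1⟩ (show i.val + 1 + n = j.val by omega))
  exact key (j.val - i.val) i (by omega)

lemma ncard_biUnion_le {W : Type*} [Fintype W] {ι : Type*} [DecidableEq ι]
    (s : Finset ι) (f : ι → Set W) (m : ℕ) (h : ∀ i ∈ s, (f i).ncard ≤ m) :
    (⋃ i ∈ s, f i).ncard ≤ s.card * m := by
  classical
  induction s using Finset.induction with
  | empty => simp
  | @insert a s ha ih =>
    rw [Finset.set_biUnion_insert]
    calc (f a ∪ ⋃ i ∈ s, f i).ncard ≤ (f a).ncard + (⋃ i ∈ s, f i).ncard :=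
          Set.ncard_union_le _ _
      _ ≤ m + s.card * m := by
          have := ih (fun i hi => h i (Finset.mem_insert_of_mem hi))
          have := h a (Finset.mem_insert_self a s)
          omega
      _ = (insert a s).card * m := by
          rw [Finset.card_insert_of_notMem ha, Nat.succ_mul]; omega

lemma kjoin_subset {p : ℕ} {b : Fin p → V} {N L R C : Set V}
    (kj : KJoinWith G b N L R C) (S : Set V) (hS : S ⊆ Set.range b) :
    IsKJoin G S := by
  classical
  set T : Finset (Fin p) := Finset.univ.filter (fun i => b i ∈ S) with hT
  let σ : Fin T.card ↪o Fin p := T.orderEmbOfFin rfl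
  set b' : Fin T.card → V := fun j => b (σ j) with hb'
  have hσT : ∀ j, σ j ∈ T := fun j => T.orderEmbOfFin_mem rfl j
  have hbS : ∀ j, b' j ∈ S := fun j => (Finset.mem_filter.1 (hσT j)).2
  have hrange : Set.range b' = S := by
    ext x
    constructor
    · rintro ⟨j, rfl⟩; exact hbS j
    · intro hx
      obtain ⟨i, rfl⟩ := hS hx
      have hiT : i ∈ T := by simp [hT, hx]
      have : i ∈ Set.range σ := by
        rw [show Set.range σ = ↑T from T.range_orderEmbOfFin rfl]
        exact hiT
      obtain ⟨j, hj⟩ := this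
      exact ⟨j, by rw [hb']; simp only; rw [hj]⟩
  set N' : Set V := {y | y ∉ S ∧ ∀ j, G.Adj y (b' j)} with hN'
  set L' : Set V := {y | y ∈ L ∧ (∃ j, G.Adj y (b' j)) ∧ ¬ ∀ j, G.Adj y (b' j)} with hL'
  set R' : Set V := {y | y ∈ R ∧ (∃ j, G.Adj y (b' j)) ∧ ¬ ∀ j, G.Adj y (b' j)} with hR'
  set C' : Set V := {y | y ∉ S ∧ ¬ (∀ j, G.Adj y (b' j)) ∧ ∀ j, ¬ G.Adj y (b' j)} with hC'
  have hd1 := List.pairwise_cons.1 kj.disj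
  have hd2 := List.pairwise_cons.1 hd1.2
  have hd3 := List.pairwise_cons.1 hd2.2
  have DBL : Disjoint (Set.range b) L := hd1.1 L (by simp)
  have DBR : Disjoint (Set.range b) R := hd1.1 R (by simp)
  have DLR : Disjoint L R := hd3.1 R (by simp)
  refine ⟨T.card, b', N', L', R', C', hrange, ?_⟩
  refine ⟨?_, ?_, ?_, ?_, ?_, ?_, ?_, ?_, ?_, ?_, ?_, ?_⟩
  · -- inj
    intro j1 j2 h
    exact σ.injective (kj.inj h)
  · -- clique
    intro i j hij
    exact kj.clique _ _ (fun h => hij (σ.injective h))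
  · -- cover
    intro v hv
    rw [hrange] at hv
    by_cases hall : ∀ j, G.Adj v (b' j)
    · exact Or.inl (Or.inl (Or.inl ⟨hv, hall⟩))
    by_cases hex : ∃ j, G.Adj v (b' j)
    · -- v has some but not all neighbours in S
      by_cases hvb : v ∈ Set.range b
      · exfalso
        obtain ⟨i, rfl⟩ := hvb
        refine hall (fun j => ?_)
        have hne : i ≠ σ j := by
          intro h; rw [h] at hv; exact hv (hbS j)
        exact kj.clique i (σ j) hne
      rcases kj.cover v hvb with ((hh | hh) | hh) | hh
      · exact absurd (fun j => kj.nAdj v hh (σ j)) hall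
      · exact Or.inl (Or.inl (Or.inr ⟨hh, hex, hall⟩))
      · exact Or.inl (Or.inr ⟨hh, hex, hall⟩)
      · obtain ⟨j, hj⟩ := hex
        exact absurd hj (kj.cNotAdj v hh (σ j))
    · push_neg at hex
      exact Or.inr ⟨hv, hall, hex⟩
  · -- disj
    rw [hrange]
    have h1 : Disjoint S N' := by
      rw [Set.disjoint_left]; intro y hy hy'; exact hy'.1 hy
    have h2 : Disjoint S L' := by
      rw [Set.disjoint_left]; intro y hy hy'
      exact Set.disjoint_left.1 DBL (hS hy) hy'.1
    have h3 : Disjoint S R' := by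
      rw [Set.disjoint_left]; intro y hy hy'
      exact Set.disjoint_left.1 DBR (hS hy) hy'.1
    have h4 : Disjoint S C' := by
      rw [Set.disjoint_left]; intro y hy hy'; exact hy'.1 hy
    have h5 : Disjoint N' L' := by
      rw [Set.disjoint_left]; intro y hy hy'; exact hy'.2.2 hy.2
    have h6 : Disjoint N' R' := by
      rw [Set.disjoint_left]; intro y hy hy'; exact hy'.2.2 hy.2
    have h7 : Disjoint N' C' := by
      rw [Set.disjoint_left]; intro y hy hy'; exact hy'.2.1 hy.2
    have h8 : Disjoint L' R' := by
      rw [Set.disjoint_left]; intro y hy hy'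
      exact Set.disjoint_left.1 DLR hy.1 hy'.1
    have h9 : Disjoint L' C' := by
      rw [Set.disjoint_left]; intro y hy hy'
      obtain ⟨j, hj⟩ := hy.2.1
      exact hy'.2.2 j hj
    have h10 : Disjoint R' C' := by
      rw [Set.disjoint_left]; intro y hy hy'
      obtain ⟨j, hj⟩ := hy.2.1
      exact hy'.2.2 j hj
    refine List.Pairwise.cons ?_ (List.Pairwise.cons ?_ (List.Pairwise.cons ?_
      (List.Pairwise.cons ?_ (List.pairwise_singleton _ _))))
    · intro a' ha'
      simp only [List.mem_cons, List.not_mem_nil, or_false] at ha'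
      rcases ha' with rfl | rfl | rfl | rfl
      exacts [h1, h2, h3, h4]
    · intro a' ha'
      simp only [List.mem_cons, List.not_mem_nil, or_false] at ha'
      rcases ha' with rfl | rfl | rfl
      exacts [h5, h6, h7]
    · intro a' ha'
      simp only [List.mem_cons, List.not_mem_nil, or_false] at ha'
      rcases ha' with rfl | rfl
      exacts [h8, h9]
    · intro a' ha'
      simp only [List.mem_cons, List.not_mem_nil, or_false] at ha'
      rcases ha' with rfl
      exact h10
  · -- nAdj
    intro v hv i; exact hv.2 i
  · -- cNotAdj
    intro v hv i; exact hv.2.2 i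
  · -- lrAdj
    rintro v (hv | hv)
    · exact hv.2.1
    · exact hv.2.1
  · -- lrNotAll
    rintro v (hv | hv)
    · exact not_forall.1 hv.2.2
    · exact not_forall.1 hv.2.2
  · -- rFirst
    intro r hr i hi hadj
    refine hr.2.2 (fun j => ?_)
    have hij : σ i ≤ σ j := σ.monotone (by rw [Fin.le_def]; omega)
    exact (kj.adj_R_mono hr.1 hij hadj.symm).symm
  · -- lLast
    intro x hx i hi hadj
    refine hx.2.2 (fun j => ?_)
    have hij : σ j ≤ σ i := σ.monotone (by rw [Fin.le_def]; omega)
    exact (kj.adj_L_mono hx.1 hij hadj.symm).symm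
  · -- rMono
    intro i j hij r hr hadj
    have : σ i ≤ σ j := σ.monotone (by rw [Fin.le_def]; omega)
    exact kj.adj_R_mono hr.1 this hadj
  · -- lMono
    intro i j hij x hx hadj
    have : σ i ≤ σ j := σ.monotone (by rw [Fin.le_def]; omega)
    exact kj.adj_L_mono hx.1 this hadj

end Aux

/-- In a sunflower-reduced positive instance where true-twin sets have at
most `k + 1` vertices and clean `K`-joins have at most `2(k + 1)` vertices,
every `K`-join has at most `k³ + 4k² + 7k + 3` vertices. -/
theorem kjoin_size_bound [Fintype V] (G : SimpleGraph V) (k : ℕ)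
    (hpos : ∃ F : Finset (Sym2 V), IsKCompletion G k F)
    (hred : SunflowerReduced G k)
    (htwins : ∀ T : Set V, (∀ u ∈ T, ∀ v ∈ T, TrueTwins G u v) →
      T.ncard ≤ k + 1)
    (hclean : ∀ B : Set V, IsCleanKJoin G B → B.ncard ≤ 2 * (k + 1)) :
    ∀ B : Set V, IsKJoin G B → B.ncard ≤ k ^ 3 + 4 * k ^ 2 + 7 * k + 3 := by
  classical
  intro B hB
  obtain ⟨F, hFcomp, hFcard⟩ := hpos
  obtain ⟨p, b, N, L, R, C, hrange, kj⟩ := hB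
  subst hrange
  -- the affected vertices
  set A : Set V := {x | ∃ e ∈ F, x ∈ e} with hA
  -- third leaves of claws whose other two leaves form a pair of F
  set Wst : Set V := {w | ∃ e ∈ F, ∃ u v, e = s(u, v) ∧ ∃ c, IsClaw G c u v w} with hWst
  -- other diagonals of induced 4-cycles having a pair of F as a diagonal
  set E4 : Set (Sym2 V) :=
    {e' | ∃ e ∈ F, ∃ u v, e = s(u, v) ∧ ∃ a d, e' = s(a, d) ∧ IsInducedC4 G u a v d} with hE4
  have hFne : ∀ e ∈ F, ∀ u v : V, e = s(u, v) → u ≠ v ∧ ¬ G.Adj u v := by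
    intro e he u v huv
    constructor
    · intro h
      exact hFcomp.1 e he (by rw [huv, Sym2.mk_isDiag_iff]; exact h)
    · intro h
      exact hFcomp.2.1 e he (by rw [huv, SimpleGraph.mem_edgeSet]; exact h)
  have hMemA : ∀ {u v : V}, s(u, v) ∈ F → u ∈ A ∧ v ∈ A := by
    intro u v hm
    exact ⟨⟨s(u, v), hm, Sym2.mem_mk_left u v⟩, ⟨s(u, v), hm, Sym2.mem_mk_right u v⟩⟩
  have hAcard : A.ncard ≤ 2 * k := by
    have heq : A = ⋃ e ∈ F, {x | x ∈ e} := by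
      ext x; simp [hA]
    have hle := ncard_biUnion_le F (fun e => {x | x ∈ e}) 2 ?_
    · rw [heq]
      exact le_trans hle (by nlinarith [hFcard])
    · intro e he
      induction e using Sym2.ind with
      | _ u v =>
        show ({x | x ∈ s(u, v)} : Set V).ncard ≤ 2
        have : {x | x ∈ s(u, v)} = {u, v} := by
          ext x; simp [Sym2.mem_iff]
        rw [this]
        exact le_trans (Set.ncard_insert_le u {v}) (by rw [Set.ncard_singleton])
  have hWcard : Wst.ncard ≤ k * k := by
    have heq : Wst = ⋃ e ∈ F, {w | ∃ u v, e = s(u, v) ∧ ∃ c, IsClaw G c u v w} := by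
      ext x; simp [hWst]
    have hle := ncard_biUnion_le F (fun e => {w | ∃ u v, e = s(u, v) ∧ ∃ c, IsClaw G c u v w}) k ?_
    · rw [heq]
      exact le_trans hle (Nat.mul_le_mul_right k hFcard)
    · intro e he
      induction e using Sym2.ind with
      | _ u v =>
        have hne := hFne _ he u v rfl
        show ({w | ∃ u' v', s(u, v) = s(u', v') ∧ ∃ c, IsClaw G c u' v' w} : Set V).ncard ≤ k
        have hsub : {w | ∃ u' v', s(u, v) = s(u', v') ∧ ∃ c, IsClaw G c u' v' w} ⊆
            {w | ∃ c, IsClaw G c u v w} := by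
          rintro w ⟨u', v', heq', c, hclaw⟩
          rcases Sym2.eq_iff.1 heq' with ⟨rfl, rfl⟩ | ⟨rfl, rfl⟩
          · exact ⟨c, hclaw⟩
          · exact ⟨c, hclaw.swap12⟩
        exact le_trans (Set.ncard_le_ncard hsub (Set.toFinite _))
          (hred u v hne.1 hne.2).1
  have hE4card : E4.ncard ≤ k * k := by
    have heq : E4 = ⋃ e ∈ F,
        {e' | ∃ u v, e = s(u, v) ∧ ∃ a d, e' = s(a, d) ∧ IsInducedC4 G u a v d} := by
      ext x; simp [hE4]
    have hle := ncard_biUnion_le F (fun e => {e' | ∃ u v, e = s(u, v) ∧ ∃ a d, e' = s(a, d) ∧ IsInducedC4 G u a v d}) k ?_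
    · rw [heq]
      exact le_trans hle (Nat.mul_le_mul_right k hFcard)
    · intro e he
      induction e using Sym2.ind with
      | _ u v =>
        have hne := hFne _ he u v rfl
        show ({e' | ∃ u' v', s(u, v) = s(u', v') ∧
          ∃ a d, e' = s(a, d) ∧ IsInducedC4 G u' a v' d} : Set (Sym2 V)).ncard ≤ k
        have hsub : {e' | ∃ u' v', s(u, v) = s(u', v') ∧
            ∃ a d, e' = s(a, d) ∧ IsInducedC4 G u' a v' d} ⊆
            {e' | ∃ a d, e' = s(a, d) ∧ IsInducedC4 G u a v d} := by
          rintro e' ⟨u', v', heq', a, d, rfl, hc4⟩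
          rcases Sym2.eq_iff.1 heq' with ⟨rfl, rfl⟩ | ⟨rfl, rfl⟩
          · exact ⟨a, d, rfl, hc4⟩
          · exact ⟨a, d, rfl, hc4.swapDiag⟩
        exact le_trans (Set.ncard_le_ncard hsub (Set.toFinite _))
          (hred u v hne.1 hne.2).2
  -- the buckets
  set Bcl : Set V := {x | x ∈ Set.range b ∧ ¬ InClaw G x ∧ ¬ InC4 G x} with hBcl
  set B4 : Set V := {x | x ∈ Set.range b ∧ x ∉ A ∧ InC4 G x} with hB4
  set M : Set V := {x | x ∈ Set.range b ∧ x ∉ A ∧ x ∉ Wst ∧ ¬ InC4 G x ∧ InClaw G x} with hM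
  have hcover : Set.range b ⊆
      (Set.range b ∩ A) ∪ (Bcl ∪ ((Set.range b ∩ Wst) ∪ (B4 ∪ M))) := by
    intro x hx
    by_cases h1 : x ∈ A
    · exact Or.inl ⟨hx, h1⟩
    by_cases h2 : x ∈ Wst
    · exact Or.inr (Or.inr (Or.inl ⟨hx, h2⟩))
    by_cases h3 : InC4 G x
    · exact Or.inr (Or.inr (Or.inr (Or.inl ⟨hx, h1, h3⟩)))
    by_cases h4 : InClaw G x
    · exact Or.inr (Or.inr (Or.inr (Or.inr ⟨hx, h1, h2, h3, h4⟩)))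
    · exact Or.inr (Or.inl ⟨hx, h4, h3⟩)
  have hBclcard : Bcl.ncard ≤ 2 * (k + 1) := by
    refine hclean Bcl ⟨kjoin_subset kj Bcl (fun x hx => hx.1), fun x hx => hx.2⟩
  have hB4card : B4.ncard ≤ k * k := by
    have key : ∀ a x c d : V, IsInducedC4 G a x c d → x ∉ A →
        ∃ d', ¬ G.Adj x d' ∧ x ≠ d' ∧ s(x, d') ∈ E4 := by
      intro a x c d h hx
      rcases c4_diag_mem hFcomp h with hm | hm
      · exact ⟨d, h.2.2.2.2.2.1, h.2.2.2.2.2.2.2,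
          ⟨s(a, c), hm, a, c, rfl, x, d, rfl, h⟩⟩
      · exact absurd (hMemA hm).1 hx
    have hex : ∀ x ∈ B4, ∃ d', ¬ G.Adj x d' ∧ x ≠ d' ∧ s(x, d') ∈ E4 := by
      intro x hx
      obtain ⟨a, b2, c, d, h, hcase⟩ := hx.2.2
      rcases hcase with rfl | rfl | rfl | rfl
      · exact key d x b2 c (h.rot.rot.rot) hx.2.1
      · exact key a x c d h hx.2.1
      · exact key b2 x d a h.rot hx.2.1
      · exact key c x a b2 h.rot.rot hx.2.1
    set φ : V → Sym2 V := fun x =>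
      if h : ∃ d', ¬ G.Adj x d' ∧ x ≠ d' ∧ s(x, d') ∈ E4 then s(x, h.choose)
      else s(x, x) with hφ
    have hmaps : ∀ x ∈ B4, φ x ∈ E4 := by
      intro x hx
      rw [hφ]; simp only
      rw [dif_pos (hex x hx)]
      exact (hex x hx).choose_spec.2.2
    have hinj : Set.InjOn φ B4 := by
      intro x hx x' hx' hφeq
      rw [hφ] at hφeq; simp only at hφeq
      rw [dif_pos (hex x hx), dif_pos (hex x' hx')] at hφeq
      rcases Sym2.eq_iff.1 hφeq with ⟨h1, _⟩ | ⟨h1, h2⟩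
      · exact h1
      · -- x = choose x', i.e. x' not adjacent to x, both in the clique
        exfalso
        obtain ⟨i, hi⟩ := hx.1
        obtain ⟨i', hi'⟩ := hx'.1
        have hne : x ≠ x' := by
          intro hcon
          exact (hex x' hx').choose_spec.2.1 (by rw [← h1, hcon])
        have : G.Adj x' x := by
          rw [← hi, ← hi']
          exact kj.clique i' i (fun hcon => hne (by rw [← hi, ← hi', hcon]))
        exact (hex x' hx').choose_spec.1 (h1 ▸ this)
    exact le_trans (Set.ncard_le_ncard_of_injOn φ hmaps hinj (Set.toFinite _)) hE4card
  -- profiles for M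
  set PL : Set V := (A ∪ Wst) ∩ L with hPL
  set PR : Set V := (A ∪ Wst) ∩ R with hPR
  set θ : V → ℕ :=
    fun x => (PL ∩ {y | ¬ G.Adj x y}).ncard + (PR ∩ {y | G.Adj x y}).ncard with hθ
  have hθle : ∀ x, θ x ≤ PL.ncard + PR.ncard := fun x =>
    Nat.add_le_add (Set.ncard_le_ncard Set.inter_subset_left (Set.toFinite _))
      (Set.ncard_le_ncard Set.inter_subset_left (Set.toFinite _))
  -- every vertex of `M` is the center of a claw whose two other leaves are a pair of `F`
  have hcenter : ∀ x ∈ M, ∃ u v w, IsClaw G x u v w ∧ s(u, v) ∈ F := by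
    intro x hx
    obtain ⟨c, l1, l2, l3, hclaw, hcase⟩ := hx.2.2.2.2
    have hxA := hx.2.1
    have hxW := hx.2.2.1
    rcases claw_pair_mem hFcomp hclaw with hm | hm | hm
    · rcases hcase with rfl | rfl | rfl | rfl
      · exact ⟨l1, l2, l3, hclaw, hm⟩
      · exact absurd ⟨_, hm, Sym2.mem_mk_left _ _⟩ hxA
      · exact absurd ⟨_, hm, Sym2.mem_mk_right _ _⟩ hxA
      · exact absurd ⟨s(l1, l2), hm, l1, l2, rfl, c, hclaw⟩ hxW
    · rcases hcase with rfl | rfl | rfl | rfl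
      · exact ⟨l1, l3, l2, hclaw.swap23, hm⟩
      · exact absurd ⟨_, hm, Sym2.mem_mk_left _ _⟩ hxA
      · exact absurd ⟨s(l1, l3), hm, l1, l3, rfl, c, hclaw.swap23⟩ hxW
      · exact absurd ⟨_, hm, Sym2.mem_mk_right _ _⟩ hxA
    · rcases hcase with rfl | rfl | rfl | rfl
      · exact ⟨l2, l3, l1, hclaw.rotl, hm⟩
      · exact absurd ⟨s(l2, l3), hm, l2, l3, rfl, c, hclaw.rotl⟩ hxW
      · exact absurd ⟨_, hm, Sym2.mem_mk_left _ _⟩ hxA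
      · exact absurd ⟨_, hm, Sym2.mem_mk_right _ _⟩ hxA
  -- a distinguisher of two profile-equivalent vertices of `M` is impossible
  have oneSided : ∀ x x' z : V, x ∈ M → x' ∈ M →
      (∀ y ∈ A ∪ Wst, (G.Adj x y ↔ G.Adj x' y)) → z ≠ x → z ≠ x' →
      G.Adj x z → ¬ G.Adj x' z → False := by
    intro x x' z hx hx' hprof hzx hzx' haxz hnax'z
    have hzP : z ∉ A ∪ Wst := fun hz => hnax'z ((hprof z hz).1 haxz)
    have hzA : z ∉ A := fun h => hzP (Or.inl h)
    have hzW : z ∉ Wst := fun h => hzP (Or.inr h)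
    obtain ⟨u, v, w, hclaw, hmF⟩ := hcenter x hx
    obtain ⟨hxu, hxv, hxw, huv, huw, hvw, nuv, nuw, nvw⟩ := hclaw
    have hx'u : G.Adj x' u := (hprof u (Or.inl (hMemA hmF).1)).1 hxu
    have hx'v : G.Adj x' v := (hprof v (Or.inl (hMemA hmF).2)).1 hxv
    have hwW : w ∈ Wst :=
      ⟨s(u, v), hmF, u, v, rfl, x, hxu, hxv, hxw, huv, huw, hvw, nuv, nuw, nvw⟩
    have hx'w : G.Adj x' w := (hprof w (Or.inr hwW)).1 hxw
    have hzu : z ≠ u := fun h => hnax'z (h ▸ hx'u)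
    have hzv : z ≠ v := fun h => hnax'z (h ▸ hx'v)
    have hzw : z ≠ w := fun h => hnax'z (h ▸ hx'w)
    have hx'C4 : ¬ InC4 G x' := hx'.2.2.2.1
    by_cases hu : G.Adj z u <;> by_cases hv' : G.Adj z v
    · -- z adjacent to both u and v : induced C4 (u, z, v, x')
      exact hx'C4 ⟨u, z, v, x',
        ⟨hu.symm, hv', hx'v.symm, hx'u, huv, fun hh => hnax'z hh.symm, nuv, hzx'⟩,
        by tauto⟩
    · by_cases hw' : G.Adj z w
      · -- C4 (u, z, w, x')
        exact hx'C4 ⟨u, z, w, x',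
          ⟨hu.symm, hw', hx'w.symm, hx'u, huw, fun hh => hnax'z hh.symm, nuw, hzx'⟩,
          by tauto⟩
      · -- claw (x, z, v, w) forces s(v,w) ∈ F, hence z ∈ Wst
        have hcl : IsClaw G x z v w := ⟨haxz, hxv, hxw, hv', hw', hvw, hzv, hzw, nvw⟩
        rcases claw_pair_mem hFcomp hcl with hm | hm | hm
        · exact hzA ⟨s(z, v), hm, Sym2.mem_mk_left z v⟩
        · exact hzA ⟨s(z, w), hm, Sym2.mem_mk_left z w⟩
        · exact hzW ⟨s(v, w), hm, v, w, rfl, x, hcl.rotl⟩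
    · by_cases hw' : G.Adj z w
      · -- C4 (v, z, w, x')
        exact hx'C4 ⟨v, z, w, x',
          ⟨hv'.symm, hw', hx'w.symm, hx'v, hvw, fun hh => hnax'z hh.symm, nvw, hzx'⟩,
          by tauto⟩
      · -- claw (x, z, u, w) forces s(u,w) ∈ F, hence z ∈ Wst
        have hcl : IsClaw G x z u w := ⟨haxz, hxu, hxw, hu, hw', huw, hzu, hzw, nuw⟩
        rcases claw_pair_mem hFcomp hcl with hm | hm | hm
        · exact hzA ⟨s(z, u), hm, Sym2.mem_mk_left z u⟩
        · exact hzA ⟨s(z, w), hm, Sym2.mem_mk_left z w⟩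
        · exact hzW ⟨s(u, w), hm, u, w, rfl, x, hcl.rotl⟩
    · -- z adjacent to neither u nor v : z is a third leaf of the claw (x, u, v, z)
      exact hzW ⟨s(u, v), hmF, u, v, rfl, x,
        hxu, hxv, haxz, huv, fun hh => hu hh.symm, fun hh => hv' hh.symm,
        nuv, hzu.symm, hzv.symm⟩
  -- profile equality for vertices of `M` in increasing order
  have hord : ∀ i i' : Fin p, i ≤ i' → b i ∈ M → b i' ∈ M → θ (b i) = θ (b i') →
      ∀ y ∈ A ∪ Wst, (G.Adj (b i) y ↔ G.Adj (b i') y) := by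
    intro i i' hii hbi hbi' hθeq
    have hsubL : PL ∩ {y | ¬ G.Adj (b i) y} ⊆ PL ∩ {y | ¬ G.Adj (b i') y} := by
      rintro y ⟨hy1, hy2⟩
      exact ⟨hy1, fun hh => hy2 (kj.adj_L_mono hy1.2 hii hh)⟩
    have hsubR : PR ∩ {y | G.Adj (b i) y} ⊆ PR ∩ {y | G.Adj (b i') y} := by
      rintro y ⟨hy1, hy2⟩
      exact ⟨hy1, kj.adj_R_mono hy1.2 hii hy2⟩
    have hcard1 := Set.ncard_le_ncard hsubL (Set.toFinite _)
    have hcard2 := Set.ncard_le_ncard hsubR (Set.toFinite _)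
    have heqL : PL ∩ {y | ¬ G.Adj (b i) y} = PL ∩ {y | ¬ G.Adj (b i') y} :=
      Set.eq_of_subset_of_ncard_le hsubL (by simp only [hθ] at hθeq; omega)
        (Set.toFinite _)
    have heqR : PR ∩ {y | G.Adj (b i) y} = PR ∩ {y | G.Adj (b i') y} :=
      Set.eq_of_subset_of_ncard_le hsubR (by simp only [hθ] at hθeq; omega)
        (Set.toFinite _)
    intro y hy
    have hybi : y ≠ b i := fun h => hbi.2.1 (by
      rcases hy with h' | h'
      · exact h ▸ h'
      · exact absurd (h ▸ h') hbi.2.2.1)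
    have hybi' : y ≠ b i' := fun h => hbi'.2.1 (by
      rcases hy with h' | h'
      · exact h ▸ h'
      · exact absurd (h ▸ h') hbi'.2.2.1)
    by_cases hyb : y ∈ Set.range b
    · obtain ⟨m, rfl⟩ := hyb
      have hmi : i ≠ m := fun h => hybi (by rw [h])
      have hmi' : i' ≠ m := fun h => hybi' (by rw [h])
      exact iff_of_true (kj.clique i m hmi) (kj.clique i' m hmi')
    · rcases kj.cover y hyb with ((hN | hL) | hR) | hC
      · exact iff_of_true (kj.nAdj y hN i).symm (kj.nAdj y hN i').symm
      · have hyPL : y ∈ PL := ⟨hy, hL⟩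
        constructor
        · intro hh
          by_contra hno
          have : y ∈ PL ∩ {y | ¬ G.Adj (b i) y} := heqL ▸ ⟨hyPL, hno⟩
          exact this.2 hh
        · intro hh
          by_contra hno
          have : y ∈ PL ∩ {y | ¬ G.Adj (b i') y} := heqL ▸ ⟨hyPL, hno⟩
          exact this.2 hh
      · have hyPR : y ∈ PR := ⟨hy, hR⟩
        constructor
        · intro hh
          have : y ∈ PR ∩ {y | G.Adj (b i') y} := heqR ▸ ⟨hyPR, hh⟩
          exact this.2
        · intro hh
          have : y ∈ PR ∩ {y | G.Adj (b i) y} := heqR.symm ▸ ⟨hyPR, hh⟩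
          exact this.2
      · exact iff_of_false (fun hh => kj.cNotAdj y hC i hh.symm)
          (fun hh => kj.cNotAdj y hC i' hh.symm)
  -- profile-equal vertices of `M` are true twins
  have hkey : ∀ i i' : Fin p, b i ∈ M → b i' ∈ M →
      (∀ y ∈ A ∪ Wst, (G.Adj (b i) y ↔ G.Adj (b i') y)) →
      TrueTwins G (b i) (b i') := by
    intro i i' hbi hbi' hprof
    by_cases hxx : b i = b i'
    · rw [hxx]; unfold TrueTwins; rfl
    have hadj : G.Adj (b i) (b i') := kj.clique i i' (fun h => hxx (by rw [h]))
    unfold TrueTwins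
    ext z
    simp only [Set.mem_insert_iff, SimpleGraph.mem_neighborSet]
    constructor
    · rintro (rfl | hz)
      · exact Or.inr hadj.symm
      · by_cases hz' : z = b i'
        · exact Or.inl hz'
        · by_cases hz'' : G.Adj (b i') z
          · exact Or.inr hz''
          · exact absurd (oneSided (b i) (b i') z hbi hbi' hprof hz.ne' hz' hz hz'')
              not_false
    · rintro (rfl | hz)
      · exact Or.inr hadj
      · by_cases hz' : z = b i
        · exact Or.inl hz'
        · by_cases hz'' : G.Adj (b i) z
          · exact Or.inr hz''
          · exact absurd (oneSided (b i') (b i) z hbi' hbi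
              (fun y hy => (hprof y hy).symm) hz.ne' hz' hz hz'') not_false
  have hMtwins : ∀ x ∈ M, ∀ x' ∈ M, θ x = θ x' → TrueTwins G x x' := by
    intro x hx x' hx' hθeq
    obtain ⟨i, rfl⟩ := hx.1
    obtain ⟨i', rfl⟩ := hx'.1
    rcases le_total i i' with hii | hii
    · exact hkey i i' hx hx' (hord i i' hii hx hx' hθeq)
    · have := hkey i' i hx' hx (hord i' i hii hx' hx hθeq.symm)
      unfold TrueTwins at this ⊢
      exact this.symm
  have hMcard : M.ncard ≤ (PL.ncard + PR.ncard + 1) * (k + 1) := by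
    have hsub : M ⊆ ⋃ t ∈ Finset.range (PL.ncard + PR.ncard + 1), {x | x ∈ M ∧ θ x = t} := by
      intro x hx
      refine Set.mem_biUnion (Finset.mem_range.2 (Nat.lt_succ_of_le (hθle x))) ⟨hx, rfl⟩
    refine le_trans (Set.ncard_le_ncard hsub (Set.toFinite _)) ?_
    have := ncard_biUnion_le (Finset.range (PL.ncard + PR.ncard + 1))
      (fun t => {x | x ∈ M ∧ θ x = t}) (k + 1) ?_
    · simpa using this
    · intro t _
      exact htwins _ (fun u hu v hv => hMtwins u hu.1 v hv.1 (hu.2.trans hv.2.symm))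
  -- final counting
  have hd1 := List.pairwise_cons.1 kj.disj
  have hd2 := List.pairwise_cons.1 hd1.2
  have hd3 := List.pairwise_cons.1 hd2.2
  have DBL : Disjoint (Set.range b) L := hd1.1 L (by simp)
  have DBR : Disjoint (Set.range b) R := hd1.1 R (by simp)
  have DLR : Disjoint L R := hd3.1 R (by simp)
  have hsumA : (Set.range b ∩ A).ncard + (A ∩ L).ncard + (A ∩ R).ncard ≤ 2 * k := by
    have d1 : Disjoint (A ∩ L) (A ∩ R) :=
      DLR.mono Set.inter_subset_right Set.inter_subset_right
    have d2 : Disjoint (Set.range b ∩ A) ((A ∩ L) ∪ (A ∩ R)) :=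
      Disjoint.union_right (DBL.mono Set.inter_subset_left Set.inter_subset_right)
        (DBR.mono Set.inter_subset_left Set.inter_subset_right)
    have heq : (Set.range b ∩ A).ncard + (A ∩ L).ncard + (A ∩ R).ncard =
        ((Set.range b ∩ A) ∪ ((A ∩ L) ∪ (A ∩ R))).ncard := by
      rw [Set.ncard_union_eq d2 (Set.toFinite _) (Set.toFinite _),
        Set.ncard_union_eq d1 (Set.toFinite _) (Set.toFinite _)]
      omega
    rw [heq]
    refine le_trans (Set.ncard_le_ncard ?_ (Set.toFinite _)) hAcard
    exact Set.union_subset Set.inter_subset_right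
      (Set.union_subset Set.inter_subset_left Set.inter_subset_left)
  have hsumW : (Set.range b ∩ Wst).ncard + (Wst ∩ L).ncard + (Wst ∩ R).ncard ≤ k * k := by
    have d1 : Disjoint (Wst ∩ L) (Wst ∩ R) :=
      DLR.mono Set.inter_subset_right Set.inter_subset_right
    have d2 : Disjoint (Set.range b ∩ Wst) ((Wst ∩ L) ∪ (Wst ∩ R)) :=
      Disjoint.union_right (DBL.mono Set.inter_subset_left Set.inter_subset_right)
        (DBR.mono Set.inter_subset_left Set.inter_subset_right)
    have heq : (Set.range b ∩ Wst).ncard + (Wst ∩ L).ncard + (Wst ∩ R).ncard =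
        ((Set.range b ∩ Wst) ∪ ((Wst ∩ L) ∪ (Wst ∩ R))).ncard := by
      rw [Set.ncard_union_eq d2 (Set.toFinite _) (Set.toFinite _),
        Set.ncard_union_eq d1 (Set.toFinite _) (Set.toFinite _)]
      omega
    rw [heq]
    refine le_trans (Set.ncard_le_ncard ?_ (Set.toFinite _)) hWcard
    exact Set.union_subset Set.inter_subset_right
      (Set.union_subset Set.inter_subset_left Set.inter_subset_left)
  have hPLle : PL.ncard ≤ (A ∩ L).ncard + (Wst ∩ L).ncard := by
    refine le_trans (Set.ncard_le_ncard ?_ (Set.toFinite _)) (Set.ncard_union_le _ _)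
    rintro y ⟨h1 | h1, h2⟩
    · exact Or.inl ⟨h1, h2⟩
    · exact Or.inr ⟨h1, h2⟩
  have hPRle : PR.ncard ≤ (A ∩ R).ncard + (Wst ∩ R).ncard := by
    refine le_trans (Set.ncard_le_ncard ?_ (Set.toFinite _)) (Set.ncard_union_le _ _)
    rintro y ⟨h1 | h1, h2⟩
    · exact Or.inl ⟨h1, h2⟩
    · exact Or.inr ⟨h1, h2⟩
  have htotal : (Set.range b).ncard ≤ (Set.range b ∩ A).ncard + (Bcl.ncard +
      ((Set.range b ∩ Wst).ncard + (B4.ncard + M.ncard))) := by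
    calc (Set.range b).ncard
        ≤ ((Set.range b ∩ A) ∪ (Bcl ∪ ((Set.range b ∩ Wst) ∪ (B4 ∪ M)))).ncard :=
          Set.ncard_le_ncard hcover (Set.toFinite _)
      _ ≤ (Set.range b ∩ A).ncard + (Bcl ∪ ((Set.range b ∩ Wst) ∪ (B4 ∪ M))).ncard :=
          Set.ncard_union_le _ _
      _ ≤ (Set.range b ∩ A).ncard + (Bcl.ncard + ((Set.range b ∩ Wst) ∪ (B4 ∪ M)).ncard) :=
          Nat.add_le_add_left (Set.ncard_union_le _ _) _
      _ ≤ (Set.range b ∩ A).ncard + (Bcl.ncard + ((Set.range b ∩ Wst).ncard + (B4 ∪ M).ncard)) := by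
          have := Set.ncard_union_le (Set.range b ∩ Wst) (B4 ∪ M)
          omega
      _ ≤ (Set.range b ∩ A).ncard + (Bcl.ncard +
            ((Set.range b ∩ Wst).ncard + (B4.ncard + M.ncard))) := by
          have := Set.ncard_union_le B4 M
          omega
  -- put everything together
  set aB := (Set.range b ∩ A).ncard
  set wB := (Set.range b ∩ Wst).ncard
  set aL := (A ∩ L).ncard
  set aR := (A ∩ R).ncard
  set wL := (Wst ∩ L).ncard
  set wR := (Wst ∩ R).ncard
  have e1 : (PL.ncard + PR.ncard + 1) * (k + 1) ≤ (aL + wL + (aR + wR) + 1) * (k + 1) :=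
    Nat.mul_le_mul_right _ (by omega)
  have e2 : (aL + wL + (aR + wR) + 1) * (k + 1) =
      (aL + wL + (aR + wR)) * k + (aL + wL + (aR + wR)) + k + 1 := by ring
  have e3 : (aL + wL + (aR + wR)) * k ≤ (2 * k + k * k) * k :=
    Nat.mul_le_mul_right _ (by omega)
  have e4 : (2 * k + k * k) * k = 2 * (k * k) + k * k * k := by ring
  have htarget : k ^ 3 + 4 * k ^ 2 + 7 * k + 3 = k * k * k + 4 * (k * k) + 7 * k + 3 := by
    ring
  rw [htarget]
  linarith [htotal, hMcard, hBclcard, hB4card, hsumA, hsumW, hPLle, hPRle, e1, e2, e3, e4]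
end

section
/- Let G = (V,E) be a finite simple graph and B a 2-branch of G whose K-join decomposition consists of p ≥ k + 4 K-joins, and suppose the attachment cliques B_1 and B_2 of B belong to the same connected component of the induced subgraph G[V ∖ B^R]. Then G admits no k-completion. -/
/-!
Let `c` be a shortest path from `B₁` to `B₂` avoiding `B^R`, and close it up into a cycle by a
shortest path `d` from its end back to its start through the branch. The last neighbour of the
first vertex of a K-join ends that K-join, so by the umbrella property the index of the K-join
grows by at most one along an edge of the branch and `d` has at least `q - 2` edges. Since `B^R` has no
neighbours outside the branch, the only possible chords of the cycle join the second (or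
second-to-last) vertices of `c` and `d`, and each of them costs `d` a step inside `B₁` (or `B₂`).

In a proper interval graph a cycle on `t` vertices spans at least `2t - 3` edges: listed along
an umbrella ordering, any two of its vertices at distance at most two are adjacent, because the
cycle without the vertex between them still has to pass from below the pair to above it, and
the umbrella property turns that jump into an edge. Hence completing a cycle of length `t` with
`c` chords costs at least `t - 3 - c ≥ q - 3 > k` new edges.
-/

open SimpleGraph Finset

variable {V : Type*}

def IsUmbrellaFamily {ι : Type*} [LT ι] (G : SimpleGraph V) (b : ι → V) : Prop :=
  ∀ i j m : ι, i < j → j < m → G.Adj (b i) (b m) → G.Adj (b i) (b j) ∧ G.Adj (b j) (b m)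

theorem IsUmbrellaFamily.adj_of_le_of_lt_of_le {ι : Type*} [PartialOrder ι]
    {G : SimpleGraph V} {b : ι → V} (hb : IsUmbrellaFamily G b) {a c x y : ι}
    (h : G.Adj (b a) (b c)) (hax : a ≤ x) (hxy : x < y) (hyc : y ≤ c) :
    G.Adj (b x) (b y) := by
  have hxc : G.Adj (b x) (b c) := by
    rcases hax.eq_or_lt with rfl | hax
    · exact h
    · exact (hb a x c hax (hxy.trans_le hyc) h).2
  rcases hyc.eq_or_lt with rfl | hyc
  · exact hxc
  · exact (hb x y c hxy hyc hxc).1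

theorem Nat.exists_crossing {P : ℕ → Prop} {a c : ℕ} (hac : a ≤ c) (ha : P a) (hc : ¬ P c) :
    ∃ n, a ≤ n ∧ n < c ∧ P n ∧ ¬ P (n + 1) := by
  induction c, hac using Nat.le_induction with
  | base => exact absurd ha hc
  | succ c hac ih =>
    by_cases hPc : P c
    · exact ⟨c, hac, c.lt_succ_self, hPc, hc⟩
    · obtain ⟨n, h₁, h₂, h₃⟩ := ih hPc
      exact ⟨n, h₁, h₂.trans c.lt_succ_self, h₃⟩

theorem IsUmbrellaFamily.adj_of_walk [LinearOrder V] {H : SimpleGraph V}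
    (humb : IsUmbrellaFamily H (id : V → V)) {w : ℕ → V} {m₁ m₂ : ℕ}
    (hw : ∀ n, m₁ ≤ n → n < m₂ → H.Adj (w n) (w (n + 1))) {x y : V} (hxy : x < y)
    (hsplit : ∀ n, m₁ ≤ n → n ≤ m₂ → w n ≤ x ∨ y ≤ w n) {a c : ℕ} (ha : m₁ ≤ a) (ha' : a ≤ m₂)
    (hc : m₁ ≤ c) (hc' : c ≤ m₂) (hwa : w a = x) (hwc : w c = y) : H.Adj x y := by
  have hyx : ¬ y ≤ x := not_le.2 hxy
  rcases le_or_gt a c with h | h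
  · obtain ⟨n, hn₁, hn₂, hn, hn'⟩ :=
      Nat.exists_crossing (P := fun n => w n ≤ x) h hwa.le (by simpa [hwc] using hyx)
    exact humb.adj_of_le_of_lt_of_le (b := id) (hw n (by omega) (by omega)) hn hxy
      ((hsplit (n + 1) (by omega) (by omega)).resolve_left hn')
  · obtain ⟨n, hn₁, hn₂, hn, hn'⟩ :=
      Nat.exists_crossing (P := fun n => ¬ w n ≤ x) h.le (by simpa [hwc] using hyx)
        (by simp [hwa])
    exact humb.adj_of_le_of_lt_of_le (b := id) (hw n (by omega) (by omega)).symm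
      (not_not.1 hn') hxy ((hsplit n (by omega) (by omega)).resolve_left hn)

structure IsCycleSeq (G : SimpleGraph V) (z : ℕ → V) (t : ℕ) : Prop where
  closed : z t = z 0
  adj : ∀ n < t, G.Adj (z n) (z (n + 1))
  injOn : Set.InjOn z (Set.Iio t)

def IsCycleEdge (z : ℕ → V) (t : ℕ) (e : Sym2 V) : Prop :=
  ∃ n < t, e = s(z n, z (n + 1))

theorem IsCycleSeq.mono {G H : SimpleGraph V} (hGH : G ≤ H) {z : ℕ → V} {t : ℕ}
    (hz : IsCycleSeq G z t) : IsCycleSeq H z t :=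
  ⟨hz.closed, fun n hn => hGH (hz.adj n hn), hz.injOn⟩

/-- The cycle minus `z j` is a path from `z a` to `z c` avoiding the open interval between them,
so one of its edges jumps over that interval. -/
theorem IsCycleSeq.adj_of_forall_le_or_le [LinearOrder V] {H : SimpleGraph V} {z : ℕ → V}
    {t : ℕ} (humb : IsUmbrellaFamily H (id : V → V)) (hz : IsCycleSeq H z t) {a c j : ℕ}
    (ha : a < t) (hc : c < t) (hj : j < t) (haj : z a < z j) (hjc : z j < z c)
    (hsplit : ∀ n < t, z n ≤ z a ∨ z n = z j ∨ z c ≤ z n) : H.Adj (z a) (z c) := by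
  have hsplit' : ∀ n < t, n ≠ j → z n ≤ z a ∨ z c ≤ z n := fun n hn hnj =>
    (hsplit n hn).imp_right (Or.resolve_left · fun h => hnj (hz.injOn hn hj h))
  -- `w` runs around the cycle twice, so that the arc avoiding index `j` is an interval
  set w : ℕ → V := fun n => if n ≤ t then z n else z (n - t) with hw
  have hw_adj : ∀ n < 2 * t, H.Adj (w n) (w (n + 1)) := by
    intro n hn
    by_cases h₁ : n + 1 ≤ t
    · simpa [hw, h₁, show n ≤ t by omega] using hz.adj n h₁
    by_cases h₂ : n = t
    · subst h₂
      simpa [hw, hz.closed] using hz.adj 0 (by omega)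
    · simpa [hw, h₁, show ¬ n ≤ t by omega, show n + 1 - t = n - t + 1 by omega]
        using hz.adj (n - t) (by omega)
  have hw_eq : ∀ n, j < n → n < j + t → ∃ m < t, m ≠ j ∧ w n = z m := by
    intro n h₁ h₂
    by_cases hnt : n < t
    · exact ⟨n, hnt, by omega, by simp [hw, hnt.le]⟩
    by_cases hnt' : n = t
    · exact ⟨0, by omega, by omega, by simp [hw, hnt', hz.closed]⟩
    · exact ⟨n - t, by omega, by omega, by simp [hw, show ¬ n ≤ t by omega]⟩
  have hlift : ∀ n < t, n ≠ j → ∃ n', j < n' ∧ n' < j + t ∧ w n' = z n := by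
    intro n hn hnj
    rcases lt_or_gt_of_ne hnj with h | h
    · refine ⟨n + t, by omega, by omega, ?_⟩
      rcases Nat.eq_zero_or_pos n with rfl | hn₀
      · simp [hw, hz.closed]
      · simp [hw, show ¬ n + t ≤ t by omega]
    · exact ⟨n, h, by omega, by simp [hw, hn.le]⟩
  obtain ⟨a', ha₁, ha₂, hwa⟩ := hlift a ha fun h => haj.ne (congrArg z h)
  obtain ⟨c', hc₁, hc₂, hwc⟩ := hlift c hc fun h => hjc.ne' (congrArg z h)
  refine humb.adj_of_walk (m₁ := j + 1) (m₂ := j + t - 1) (fun n _ _ => hw_adj n (by omega))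
    (haj.trans hjc) (fun n _ _ => ?_) (by omega) (by omega) (by omega) (by omega) hwa hwc
  obtain ⟨m, hm, hmj, hwm⟩ := hw_eq n (by omega) (by omega)
  rw [hwm]
  exact hsplit' m hm hmj

theorem two_mul_sub_three_le_card_of_forall_mem {v : ℕ → V} {t : ℕ}
    (hv : Set.InjOn v (Set.Iio t)) {E : Finset (Sym2 V)}
    (hE : ∀ i j, i < j → j ≤ i + 2 → j < t → s(v i, v j) ∈ E) : 2 * t - 3 ≤ E.card := by
  classical
  have hpair : ∀ a b c d, a < b → c < d → b < t → d < t → s(v a, v b) = s(v c, v d) →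
      a = c ∧ b = d := by
    intro a b c d hab hcd hb hd h
    have inj : ∀ {x y}, x < t → y < t → v x = v y → x = y := fun hx hy => hv hx hy
    rcases Sym2.eq_iff.1 h with ⟨h₁, h₂⟩ | ⟨h₁, h₂⟩
    · exact ⟨inj (by omega) (by omega) h₁, inj hb hd h₂⟩
    · have := inj (by omega) hd h₁
      have := inj hb (by omega) h₂
      omega
  set E₁ := (range (t - 1)).image fun i => s(v i, v (i + 1))
  set E₂ := (range (t - 2)).image fun i => s(v i, v (i + 2))
  have hE₁ : E₁.card = t - 1 := by
    rw [card_image_of_injOn, card_range]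
    intro a ha c hc h
    simp only [coe_range, Set.mem_Iio] at ha hc
    exact (hpair _ _ _ _ (by omega) (by omega) (by omega) (by omega) h).1
  have hE₂ : E₂.card = t - 2 := by
    rw [card_image_of_injOn, card_range]
    intro a ha c hc h
    simp only [coe_range, Set.mem_Iio] at ha hc
    exact (hpair _ _ _ _ (by omega) (by omega) (by omega) (by omega) h).1
  have hdisj : Disjoint E₁ E₂ := by
    simp only [E₁, E₂, Finset.disjoint_left, mem_image, mem_range]
    rintro _ ⟨a, ha, rfl⟩ ⟨c, hc, h⟩
    have := hpair _ _ _ _ (by omega) (by omega) (by omega) (by omega) h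
    omega
  have hsub : E₁ ∪ E₂ ⊆ E := by
    simp only [E₁, E₂, union_subset_iff, image_subset_iff, mem_range]
    exact ⟨fun i hi => hE _ _ (by omega) (by omega) (by omega),
      fun i hi => hE _ _ (by omega) (by omega) (by omega)⟩
  have := card_le_card hsub
  rw [card_union_of_disjoint hdisj, hE₁, hE₂] at this
  omega

/-- `u i` and `u (i + 2)` are separated by `u (i + 1)` alone, so the cycle jumps over them. -/
theorem IsCycleSeq.adj_of_orderEmbedding [LinearOrder V] {H : SimpleGraph V} {z : ℕ → V}
    {t : ℕ} (humb : IsUmbrellaFamily H (id : V → V)) (hz : IsCycleSeq H z t) (ht : 3 ≤ t)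
    (u : Fin t ↪o V) (hu : ∀ i, ∃ n < t, z n = u i) (hzu : ∀ n < t, ∃ i, u i = z n)
    {i k : Fin t} (hik : i < k) (hki : k.val ≤ i.val + 2) : H.Adj (u i) (u k) := by
  have hskip : ∀ (i : Fin t) (h : i.val + 2 < t), H.Adj (u i) (u ⟨i + 2, h⟩) := by
    intro i h
    obtain ⟨a, ha, hza⟩ := hu i
    obtain ⟨c, hc, hzc⟩ := hu ⟨i + 2, h⟩
    obtain ⟨j, hj, hzj⟩ := hu ⟨i + 1, by omega⟩
    have h₁ : u i < u ⟨i + 1, by omega⟩ := u.strictMono (Fin.lt_def.2 (by simp))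
    have h₂ : u ⟨i + 1, by omega⟩ < u ⟨i + 2, h⟩ := u.strictMono (Fin.lt_def.2 (by simp))
    rw [← hza, ← hzc]
    refine hz.adj_of_forall_le_or_le humb ha hc hj (by rwa [hza, hzj]) (by rwa [hzj, hzc])
      fun n hn => ?_
    obtain ⟨m, hm⟩ := hzu n hn
    rw [hza, hzj, hzc, ← hm]
    rcases lt_trichotomy m.val (i.val + 1) with hmi | hmi | hmi
    · exact Or.inl (u.monotone (Fin.le_def.2 (by omega)))
    · exact Or.inr (Or.inl (congrArg u (Fin.ext hmi)))
    · exact Or.inr (Or.inr (u.monotone (Fin.le_def.2 (by simp only; omega))))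
  have hik' := Fin.lt_def.1 hik
  have hchain : ∀ a c : Fin t, H.Adj (u a) (u c) → a ≤ i → k ≤ c → H.Adj (u i) (u k) :=
    fun a c h hai hkc => humb.adj_of_le_of_lt_of_le (b := id) h (u.monotone hai)
      (u.strictMono hik) (u.monotone hkc)
  by_cases h : i.val + 2 < t
  · exact hchain i _ (hskip i h) le_rfl (Fin.le_def.2 (by simp only; omega))
  · have := hskip ⟨i - 1, by omega⟩ (by simp only; omega)
    simp only [show i.val - 1 + 2 = i.val + 1 by omega] at this
    exact hchain _ _ this (Fin.le_def.2 (by simp only; omega)) (Fin.le_def.2 (by simp only; omega))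

theorem IsCycleSeq.two_mul_sub_three_le_card {H : SimpleGraph V} {f : V → ℕ}
    (hf : IsUmbrellaOrdering H f) {z : ℕ → V} {t : ℕ} (hz : IsCycleSeq H z t) (ht : 3 ≤ t)
    {E : Finset (Sym2 V)} (hE : ∀ i < t, ∀ j < t, H.Adj (z i) (z j) → s(z i, z j) ∈ E) :
    2 * t - 3 ≤ E.card := by
  let _ : LinearOrder V := LinearOrder.lift' f hf.1
  have hs : ((range t).image z).card = t := by
    rw [card_image_of_injOn (by simpa using hz.injOn), card_range]
  set u := ((range t).image z).orderEmbOfFin hs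
  have hu : ∀ i, ∃ n < t, z n = u i := fun i => by
    simpa only [mem_image, mem_range] using ((range t).image z).orderEmbOfFin_mem hs i
  have hzu : ∀ n < t, ∃ i, u i = z n := fun n hn => by
    rw [← Set.mem_range, Finset.range_orderEmbOfFin]
    exact mem_image_of_mem z (mem_range.2 hn)
  set v : ℕ → V := fun n => if h : n < t then u ⟨n, h⟩ else z 0
  have hv : ∀ n (h : n < t), v n = u ⟨n, h⟩ := fun n h => dif_pos h
  refine two_mul_sub_three_le_card_of_forall_mem (v := v) ?_ fun i j hij hji hj => ?_
  · intro m hm n hn h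
    simp only [Set.mem_Iio] at hm hn
    rw [hv m hm, hv n hn] at h
    simpa using u.injective h
  · obtain ⟨a, ha, hza⟩ := hu ⟨i, by omega⟩
    obtain ⟨c, hc, hzc⟩ := hu ⟨j, hj⟩
    rw [hv i (by omega), hv j hj, ← hza, ← hzc]
    exact hE a ha c hc (by
      rw [hza, hzc]
      exact hz.adj_of_orderEmbedding hf.2 ht u hu hzu (Fin.lt_def.2 hij) hji)

theorem IsCycleSeq.sub_three_le_card_add_card {G : SimpleGraph V} {F chords : Finset (Sym2 V)}
    (hPI : IsProperIntervalGraph (addEdges G F)) {z : ℕ → V} {t : ℕ} (hz : IsCycleSeq G z t)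
    (ht : 3 ≤ t)
    (hchord : ∀ i < t, ∀ j < t, G.Adj (z i) (z j) →
      IsCycleEdge z t s(z i, z j) ∨ s(z i, z j) ∈ chords) :
    t - 3 ≤ F.card + chords.card := by
  classical
  obtain ⟨f, hf⟩ := hPI
  set cyc := (range t).image fun n => s(z n, z (n + 1))
  have hcount := (hz.mono le_sup_left).two_mul_sub_three_le_card hf ht
    (E := cyc ∪ chords ∪ F) fun i hi j hj h => by
      rcases (sup_adj _ _ _ _).1 h with h | h
      · rcases hchord i hi j hj h with ⟨n, hn, he⟩ | h
        · exact mem_union_left _ (mem_union_left _ (he ▸ mem_image_of_mem _ (mem_range.2 hn)))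
        · exact mem_union_left _ (mem_union_right _ h)
      · exact mem_union_right _ ((fromEdgeSet_adj _).1 h).1
  have hcyc : cyc.card ≤ t := card_image_le.trans (card_range t).le
  have := (card_union_le _ _).trans (add_le_add_left (card_union_le cyc chords) F.card)
  omega

structure IsWalkFromTo (G : SimpleGraph V) (U S T : Set V) (c : ℕ → V) (r : ℕ) : Prop where
  start_mem : c 0 ∈ S
  end_mem : c r ∈ T
  adj : ∀ j < r, G.Adj (c j) (c (j + 1))
  mem : ∀ j ≤ r, c j ∈ U

namespace IsWalkFromTo

variable {G : SimpleGraph V} {U S T : Set V} {c : ℕ → V} {r : ℕ}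

theorem take (h : IsWalkFromTo G U S T c r) {j : ℕ} (hj : j ≤ r) {T' : Set V} (hT : c j ∈ T') :
    IsWalkFromTo G U S T' c j :=
  ⟨h.start_mem, hT, fun n hn => h.adj n (by omega), fun n hn => h.mem n (by omega)⟩

theorem drop (h : IsWalkFromTo G U S T c r) {j : ℕ} (hj : j ≤ r) {S' : Set V} (hS : c j ∈ S') :
    IsWalkFromTo G U S' T (fun n => c (n + j)) (r - j) :=
  ⟨by simpa using hS, by simpa [Nat.sub_add_cancel hj] using h.end_mem,
    fun n hn => by simpa [Nat.add_right_comm] using h.adj (n + j) (by omega),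
    fun n hn => h.mem _ (by omega)⟩

theorem cons (h : IsWalkFromTo G U S T c r) {v : V} {S' : Set V} (hvS : v ∈ S') (hvU : v ∈ U)
    (hv : G.Adj v (c 0)) :
    IsWalkFromTo G U S' T (fun n => if n = 0 then v else c (n - 1)) (r + 1) := by
  refine ⟨by simpa using hvS, by simpa using h.end_mem, fun n hn => ?_, fun n hn => ?_⟩
  · rcases n with _ | n
    · simpa using hv
    · simpa using h.adj n (by omega)
  · rcases n with _ | n
    · simpa using hvU
    · simpa using h.mem n (by omega)

theorem append (h₁ : IsWalkFromTo G U S T c r) {d : ℕ → V} {s : ℕ} {T' : Set V}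
    (h₂ : IsWalkFromTo G U {c r} T' d s) :
    IsWalkFromTo G U S T' (fun n => if n ≤ r then c n else d (n - r)) (r + s) := by
  have hd₀ : d 0 = c r := h₂.start_mem
  refine ⟨by simpa using h₁.start_mem, ?_, fun n hn => ?_, fun n hn => ?_⟩
  · rcases Nat.eq_zero_or_pos s with rfl | hs
    · simpa [hd₀] using h₂.end_mem
    · simpa [show ¬ r + s ≤ r by omega] using h₂.end_mem
  · by_cases h : n + 1 ≤ r
    · simpa [h, show n ≤ r by omega] using h₁.adj n h
    by_cases h' : n = r
    · subst h'
      simpa [hd₀] using h₂.adj 0 (by omega)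
    · simpa [h, h', show ¬ n ≤ r by omega, show n + 1 - r = n - r + 1 by omega]
        using h₂.adj (n - r) (by omega)
  · by_cases h : n ≤ r
    · simpa [h] using h₁.mem n h
    · simpa [h] using h₂.mem (n - r) (by omega)

theorem reverse (h : IsWalkFromTo G U S T c r) :
    IsWalkFromTo G U T S (fun n => c (r - n)) r :=
  ⟨by simpa using h.end_mem, by simpa using h.start_mem,
    fun n hn => by simpa [show r - n = r - (n + 1) + 1 by omega] using (h.adj _ (by omega)).symm,
    fun n _ => h.mem _ (by omega)⟩

theorem le_add_of_lipschitz (h : IsWalkFromTo G U S T c r) {Ψ : V → ℕ}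
    (hΨ : ∀ x ∈ U, ∀ y ∈ U, G.Adj x y → Ψ y ≤ Ψ x + 1) {i j : ℕ} (hij : i ≤ j) (hj : j ≤ r) :
    Ψ (c j) ≤ Ψ (c i) + (j - i) := by
  induction j, hij using Nat.le_induction with
  | base => simp
  | succ j hij ih =>
    have := hΨ _ (h.mem j (by omega)) _ (h.mem (j + 1) hj) (h.adj j (by omega))
    have := ih (by omega)
    omega

end IsWalkFromTo

theorem exists_isWalkFromTo_of_reachable {G : SimpleGraph V} {U S T : Set V} {x y : U}
    (h : (G.induce U).Reachable x y) (hx : x.1 ∈ S) (hy : y.1 ∈ T) :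
    ∃ c r, IsWalkFromTo G U S T c r := by
  obtain ⟨W⟩ := h
  exact ⟨fun n => (W.getVert n).1, W.length, by simpa using hx, by simpa using hy,
    fun j hj => W.adj_getVert_succ hj, fun j _ => (W.getVert j).2⟩

def IsShortestWalkFromTo (G : SimpleGraph V) (U S T : Set V) (c : ℕ → V) (r : ℕ) : Prop :=
  IsWalkFromTo G U S T c r ∧ ∀ c' r', IsWalkFromTo G U S T c' r' → r ≤ r'

theorem exists_isShortestWalkFromTo {G : SimpleGraph V} {U S T : Set V}
    (h : ∃ c r, IsWalkFromTo G U S T c r) : ∃ c r, IsShortestWalkFromTo G U S T c r := by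
  classical
  have h' : ∃ r c, IsWalkFromTo G U S T c r := let ⟨c, r, hc⟩ := h; ⟨r, c, hc⟩
  obtain ⟨c, hc⟩ := Nat.find_spec h'
  exact ⟨c, _, hc, fun c' r' hc' => Nat.find_min' h' ⟨c', hc'⟩⟩

namespace IsShortestWalkFromTo

variable {G : SimpleGraph V} {U S T K : Set V} {c : ℕ → V} {r : ℕ}

theorem reverse (h : IsShortestWalkFromTo G U S T c r) :
    IsShortestWalkFromTo G U T S (fun n => c (r - n)) r :=
  ⟨h.1.reverse, fun c' r' hc' => h.2 _ _ (by simpa using hc'.reverse)⟩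

theorem injOn (h : IsShortestWalkFromTo G U S T c r) : Set.InjOn c (Set.Iic r) := by
  have key : ∀ i j, i < j → j ≤ r → c i ≠ c j := fun i j hij hj hc => by
    have := h.2 _ _ ((h.1.take (j := i) (by omega) rfl).append (h.1.drop hj hc.symm))
    omega
  intro i hi j hj hij
  simp only [Set.mem_Iic] at hi hj
  by_contra hne
  rcases lt_or_gt_of_ne hne with hlt | hlt
  · exact key i j hlt hj hij
  · exact key j i hlt hi hij.symm

theorem not_adj (h : IsShortestWalkFromTo G U S T c r) {i j : ℕ} (hij : i + 2 ≤ j) (hj : j ≤ r) :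
    ¬ G.Adj (c i) (c j) := fun hadj => by
  have := h.2 _ _ ((h.1.take (j := i) (by omega) rfl).append
    ((h.1.drop hj rfl).cons rfl (h.1.mem i (by omega)) (by simpa using hadj)))
  omega

theorem notMem_start (h : IsShortestWalkFromTo G U S T c r) {j : ℕ} (hj₀ : 0 < j) (hj : j ≤ r) :
    c j ∉ S := fun hS => by
  have := h.2 _ _ (h.1.drop hj hS)
  omega

theorem notMem_end (h : IsShortestWalkFromTo G U S T c r) {j : ℕ} (hj : j < r) :
    c j ∉ T := fun hT => by
  have := h.2 _ _ (h.1.take hj.le hT)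
  omega

theorem not_adj_start (h : IsShortestWalkFromTo G U S T c r) {j : ℕ} (hj₂ : 2 ≤ j) (hj : j ≤ r)
    {v : V} (hvS : v ∈ S) (hvU : v ∈ U) : ¬ G.Adj (c j) v := fun hadj => by
  have := h.2 _ _ ((h.1.drop hj rfl).cons hvS hvU (by simpa using hadj.symm))
  omega

theorem not_adj_end (h : IsShortestWalkFromTo G U S T c r) {j : ℕ} (hj : j + 2 ≤ r)
    {v : V} (hvT : v ∈ T) (hvU : v ∈ U) : ¬ G.Adj (c j) v := by
  simpa [show r - (r - j) = j by omega] using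
    h.reverse.not_adj_start (j := r - j) (by omega) (by omega) hvT hvU

theorem le_one_of_isClique (h : IsShortestWalkFromTo G U S T c r) (hK : G.IsClique K)
    (h₀ : c 0 ∈ K) {i : ℕ} (hi : i ≤ r) (hci : c i ∈ K) : i ≤ 1 := by
  by_contra! hi₁
  have hne : c 0 ≠ c i := fun h' => by
    have := h.injOn (Set.mem_Iic.2 (Nat.zero_le r)) (Set.mem_Iic.2 hi) h'
    omega
  exact h.not_adj (i := 0) (by omega) hi (hK h₀ hci hne)

theorem add_one_le_of_isClique (h : IsShortestWalkFromTo G U S T c r) (hK : G.IsClique K)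
    (hr : c r ∈ K) {i : ℕ} (hi : i ≤ r) (hci : c i ∈ K) : r ≤ i + 1 := by
  have := h.reverse.le_one_of_isClique hK (by simpa using hr) (i := r - i) (by omega)
    (by simpa [show r - (r - i) = i by omega] using hci)
  omega

end IsShortestWalkFromTo

structure IsInducedPath (G : SimpleGraph V) (c : ℕ → V) (r : ℕ) : Prop where
  injOn : Set.InjOn c (Set.Iic r)
  adj : ∀ j < r, G.Adj (c j) (c (j + 1))
  not_adj : ∀ i j, i + 2 ≤ j → j ≤ r → ¬ G.Adj (c i) (c j)

theorem IsShortestWalkFromTo.isInducedPath {G : SimpleGraph V} {U S T : Set V} {c : ℕ → V}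
    {r : ℕ} (h : IsShortestWalkFromTo G U S T c r) : IsInducedPath G c r :=
  ⟨h.injOn, h.1.adj, fun _ _ hij hj => h.not_adj hij hj⟩

theorem IsInducedPath.exists_sym2_eq_of_adj {G : SimpleGraph V} {c : ℕ → V} {r : ℕ}
    (h : IsInducedPath G c r) {i j : ℕ} (hi : i ≤ r) (hj : j ≤ r) (hadj : G.Adj (c i) (c j)) :
    ∃ m < r, s(c i, c j) = s(c m, c (m + 1)) := by
  have hne : i ≠ j := fun hij => hadj.ne (hij ▸ rfl)
  rcases lt_or_gt_of_ne hne with hlt | hlt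
  · refine ⟨i, by omega, ?_⟩
    obtain rfl : j = i + 1 := by
      by_contra h'
      exact h.not_adj i j (by omega) hj hadj
    rfl
  · refine ⟨j, by omega, ?_⟩
    obtain rfl : i = j + 1 := by
      by_contra h'
      exact h.not_adj j i (by omega) hi hadj.symm
    exact Sym2.eq_swap

def appendReverse (c₁ : ℕ → V) (r₁ : ℕ) (c₂ : ℕ → V) (r₂ : ℕ) (n : ℕ) : V :=
  if n ≤ r₁ then c₁ n else c₂ (r₁ + r₂ - n)

section appendReverse

variable {G : SimpleGraph V} {c₁ c₂ : ℕ → V} {r₁ r₂ : ℕ}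

theorem appendReverse_of_le {n : ℕ} (hn : n ≤ r₁) : appendReverse c₁ r₁ c₂ r₂ n = c₁ n :=
  if_pos hn

theorem appendReverse_sub (hr : c₁ r₁ = c₂ r₂) {j : ℕ} (hj : j ≤ r₂) :
    appendReverse c₁ r₁ c₂ r₂ (r₁ + r₂ - j) = c₂ j := by
  unfold appendReverse
  split_ifs with h
  · obtain rfl : j = r₂ := by omega
    simpa using hr
  · congr 1; omega

theorem appendReverse_cases (n : ℕ) :
    (n ≤ r₁ ∧ appendReverse c₁ r₁ c₂ r₂ n = c₁ n) ∨
      (r₁ < n ∧ appendReverse c₁ r₁ c₂ r₂ n = c₂ (r₁ + r₂ - n)) := by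
  unfold appendReverse
  split_ifs with h
  · exact Or.inl ⟨h, rfl⟩
  · exact Or.inr ⟨by omega, rfl⟩

theorem IsInducedPath.isCycleSeq_appendReverse (h₁ : IsInducedPath G c₁ r₁)
    (h₂ : IsInducedPath G c₂ r₂) (h₀ : c₁ 0 = c₂ 0) (hr : c₁ r₁ = c₂ r₂)
    (hdisj : ∀ i ≤ r₁, ∀ j, 0 < j → j < r₂ → c₁ i ≠ c₂ j) :
    IsCycleSeq G (appendReverse c₁ r₁ c₂ r₂) (r₁ + r₂) := by
  refine ⟨?_, fun n hn => ?_, fun n hn n' hn' h => ?_⟩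
  · simpa [appendReverse_of_le (Nat.zero_le _), h₀] using appendReverse_sub hr (Nat.zero_le r₂)
  · by_cases h : n < r₁
    · rw [appendReverse_of_le h.le, appendReverse_of_le h]
      exact h₁.adj n h
    · have e₁ := appendReverse_sub hr (j := r₁ + r₂ - (n + 1)) (by omega)
      have e₂ := appendReverse_sub hr (j := r₁ + r₂ - (n + 1) + 1) (by omega)
      rw [show r₁ + r₂ - (r₁ + r₂ - (n + 1)) = n + 1 by omega] at e₁
      rw [show r₁ + r₂ - (r₁ + r₂ - (n + 1) + 1) = n by omega] at e₂
      rw [e₁, e₂]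
      exact (h₂.adj _ (by omega)).symm
  · simp only [Set.mem_Iio] at hn hn'
    rcases appendReverse_cases (c₁ := c₁) (c₂ := c₂) (r₂ := r₂) n with ⟨hn₁, e⟩ | ⟨hn₁, e⟩ <;>
    rcases appendReverse_cases (c₁ := c₁) (c₂ := c₂) (r₂ := r₂) n' with ⟨hn₁', e'⟩ | ⟨hn₁', e'⟩ <;>
    rw [e, e'] at h
    · exact h₁.injOn hn₁ hn₁' h
    · exact absurd h (hdisj n hn₁ _ (by omega) (by omega))
    · exact absurd h.symm (hdisj n' hn₁' _ (by omega) (by omega))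
    · have := h₂.injOn (show r₁ + r₂ - n ≤ r₂ by omega) (show r₁ + r₂ - n' ≤ r₂ by omega) h
      omega

theorem isCycleEdge_appendReverse_left {i : ℕ} (hi : i < r₁) :
    IsCycleEdge (appendReverse c₁ r₁ c₂ r₂) (r₁ + r₂) s(c₁ i, c₁ (i + 1)) :=
  ⟨i, by omega, by rw [appendReverse_of_le hi.le, appendReverse_of_le hi]⟩

theorem isCycleEdge_appendReverse_right (hr : c₁ r₁ = c₂ r₂) {j : ℕ} (hj : j < r₂) :
    IsCycleEdge (appendReverse c₁ r₁ c₂ r₂) (r₁ + r₂) s(c₂ j, c₂ (j + 1)) := by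
  refine ⟨r₁ + r₂ - (j + 1), by omega, ?_⟩
  rw [show r₁ + r₂ - (j + 1) + 1 = r₁ + r₂ - j by omega, appendReverse_sub hr hj.le,
    appendReverse_sub hr hj, Sym2.eq_swap]

theorem IsInducedPath.adj_appendReverse (h₁ : IsInducedPath G c₁ r₁)
    (h₂ : IsInducedPath G c₂ r₂) (h₀ : c₁ 0 = c₂ 0) (hr : c₁ r₁ = c₂ r₂)
    {chords : Finset (Sym2 V)}
    (hcross : ∀ i j, 0 < i → i < r₁ → 0 < j → j < r₂ → G.Adj (c₁ i) (c₂ j) →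
      s(c₁ i, c₂ j) ∈ chords)
    {n n' : ℕ} (hn : n < r₁ + r₂) (hn' : n' < r₁ + r₂)
    (hadj : G.Adj (appendReverse c₁ r₁ c₂ r₂ n) (appendReverse c₁ r₁ c₂ r₂ n')) :
    IsCycleEdge (appendReverse c₁ r₁ c₂ r₂) (r₁ + r₂)
        s(appendReverse c₁ r₁ c₂ r₂ n, appendReverse c₁ r₁ c₂ r₂ n') ∨
      s(appendReverse c₁ r₁ c₂ r₂ n, appendReverse c₁ r₁ c₂ r₂ n') ∈ chords := by
  set Q : V → V → Prop := fun x y =>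
    IsCycleEdge (appendReverse c₁ r₁ c₂ r₂) (r₁ + r₂) s(x, y) ∨ s(x, y) ∈ chords
  have hQ_symm : ∀ x y, Q x y → Q y x := fun x y => by simp only [Q, Sym2.eq_swap, imp_self]
  have hQ₁ : ∀ i ≤ r₁, ∀ i' ≤ r₁, G.Adj (c₁ i) (c₁ i') → Q (c₁ i) (c₁ i') := fun i hi i' hi' h =>
    let ⟨m, hm, he⟩ := h₁.exists_sym2_eq_of_adj hi hi' h
    Or.inl (he ▸ isCycleEdge_appendReverse_left hm)
  have hQ₂ : ∀ j ≤ r₂, ∀ j' ≤ r₂, G.Adj (c₂ j) (c₂ j') → Q (c₂ j) (c₂ j') := fun j hj j' hj' h =>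
    let ⟨m, hm, he⟩ := h₂.exists_sym2_eq_of_adj hj hj' h
    Or.inl (he ▸ isCycleEdge_appendReverse_right hr hm)
  have hQ₁₂ : ∀ i ≤ r₁, ∀ j, 0 < j → j < r₂ → G.Adj (c₁ i) (c₂ j) → Q (c₁ i) (c₂ j) := by
    intro i hi j hj₀ hj h
    rcases Nat.eq_zero_or_pos i with rfl | hi₀
    · rw [h₀] at h ⊢; exact hQ₂ 0 (by omega) j hj.le h
    rcases hi.eq_or_lt with rfl | hi'
    · rw [hr] at h ⊢; exact hQ₂ r₂ le_rfl j hj.le h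
    · exact Or.inr (hcross i j hi₀ hi' hj₀ hj h)
  show Q _ _
  rcases appendReverse_cases (c₁ := c₁) (r₁ := r₁) (c₂ := c₂) (r₂ := r₂) n
    with ⟨hn₁, e⟩ | ⟨hn₁, e⟩ <;>
  rcases appendReverse_cases (c₁ := c₁) (r₁ := r₁) (c₂ := c₂) (r₂ := r₂) n'
    with ⟨hn₁', e'⟩ | ⟨hn₁', e'⟩ <;>
  rw [e, e'] at hadj ⊢
  · exact hQ₁ n hn₁ n' hn₁' hadj
  · exact hQ₁₂ n hn₁ _ (by omega) (by omega) hadj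
  · exact hQ_symm _ _ (hQ₁₂ n' hn₁' _ (by omega) (by omega) hadj.symm)
  · exact hQ₂ _ (by omega) _ (by omega) hadj

end appendReverse

/-- With `y = e i + 1` the first vertex of a K-join, by the umbrella property a neighbour of a
vertex `a ≤ y` is either at most `y` or a neighbour of `y`, and the neighbours of `y` end at
`e j`. -/
theorem KJoinDecomp.le_of_adj {G : SimpleGraph V} {p : ℕ} {b : Fin p → V} {l l' : Fin p}
    {q : ℕ} {e : Fin q → Fin p} (humb : IsUmbrellaFamily G b) (hdec : KJoinDecomp G b l l' q e)
    {i j : Fin q} (hij : i.val + 1 = j.val) (hj : j.val + 1 < q) {a c : Fin p}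
    (ha : a.val ≤ (e i).val + 1) (hac : G.Adj (b a) (b c)) : c ≤ e j := by
  obtain ⟨-, -, -, hmono, hpair⟩ := hdec
  obtain ⟨hs, hfirst, -⟩ := hpair i j hij
  obtain ⟨-, -, hmax⟩ := hfirst hj
  have hij' : e i < e j := hmono (Fin.lt_def.2 (by omega))
  by_cases hc : c.val ≤ (e i).val + 1
  · exact Fin.le_def.2 (by rw [Fin.lt_def] at hij'; omega)
  · exact hmax c (humb.adj_of_le_of_lt_of_le hac (Fin.le_def.2 ha) (Fin.lt_def.2 (by
      simp only; omega)) le_rfl)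

theorem KJoinDecomp.exists_potential {G : SimpleGraph V} {p : ℕ} {b : Fin p → V}
    {l l' : Fin p} {q : ℕ} {e : Fin q → Fin p} (humb : IsUmbrellaFamily G b)
    (hdec : KJoinDecomp G b l l' q e) :
    ∃ ψ : Fin p → ℕ, (∀ a ≤ l', ψ a = 0) ∧ (∀ a, l ≤ a → ψ a = q - 2) ∧
      ∀ a c, G.Adj (b a) (b c) → ψ c ≤ ψ a + 1 := by
  classical
  obtain ⟨hq, hfirst, -, -, hpair⟩ := id hdec
  have hbefore : ∀ i : Fin q, i.val + 2 < q → (e i).val + 1 < l.val := fun i hi => by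
    obtain ⟨hs, h, -⟩ := hpair i ⟨i + 1, by omega⟩ rfl
    exact Fin.lt_def.1 (h (by simp only; omega)).1
  have hex : ∀ a : Fin p, ∃ i, q - 2 ≤ i ∨ ∃ h : i < q, a.val ≤ (e ⟨i, h⟩).val + 1 :=
    fun _ => ⟨q - 2, Or.inl le_rfl⟩
  refine ⟨fun a => Nat.find (hex a), fun a ha => ?_, fun a ha => ?_, fun a c hac => ?_⟩ <;>
    dsimp only
  · refine (Nat.find_eq_zero _).2 (Or.inr ⟨hq, ?_⟩)
    rw [hfirst ⟨0, hq⟩ rfl]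
    exact Nat.le_succ_of_le ha
  · refine le_antisymm (Nat.find_le (Or.inl le_rfl)) (not_lt.1 fun hlt => ?_)
    rcases Nat.find_spec (hex a) with h | ⟨h, h'⟩
    · omega
    · have := hbefore ⟨_, h⟩ (by simp only; omega)
      rw [Fin.le_def] at ha
      omega
  · refine Nat.find_le ?_
    by_cases hi : q - 2 ≤ Nat.find (hex a) + 1
    · exact Or.inl hi
    · refine Or.inr ⟨by omega, Nat.le_succ_of_le (Fin.le_def.1 (hdec.le_of_adj humb
        (i := ⟨_, (by omega : Nat.find (hex a) < q)⟩) rfl (by simp only; omega) ?_ hac))⟩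
      rcases Nat.find_spec (hex a) with h | ⟨h, h'⟩
      · omega
      · exact h'

theorem mem_image_or_mem_image_or_mem_image {p : ℕ} {b : Fin p → V} {l l' : Fin p} {x : V}
    (hx : x ∈ Set.range b) :
    x ∈ b '' {i | i ≤ l'} ∨ x ∈ b '' {i | l' < i ∧ i < l} ∨ x ∈ b '' {i | l ≤ i} := by
  obtain ⟨a, rfl⟩ := hx
  rcases le_or_gt a l' with h | h
  · exact Or.inl ⟨a, h, rfl⟩
  rcases lt_or_ge a l with h' | h'
  · exact Or.inr (Or.inl ⟨a, ⟨h, h'⟩, rfl⟩)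
  · exact Or.inr (Or.inr ⟨a, h', rfl⟩)

namespace TwoBranch

variable {G : SimpleGraph V} {p : ℕ} {b : Fin p → V} {L R C : Set V} {l l' : Fin p}
  {q : ℕ} {e : Fin q → Fin p}

theorem isUmbrellaFamily (hB : TwoBranch G b L R C l l') : IsUmbrellaFamily G b := hB.umbrella

theorem isClique_image_le (hB : TwoBranch G b L R C l l') : G.IsClique (b '' {i | i ≤ l'}) := by
  have key : ∀ a c : Fin p, a < c → c ≤ l' → G.Adj (b a) (b c) := fun a c hac hc => by
    rcases hB.lNbr' with h | h
    · exact absurd (hac.trans_le hc) (by rw [Fin.lt_def]; omega)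
    · exact hB.isUmbrellaFamily.adj_of_le_of_lt_of_le h (Fin.le_def.2 (Nat.zero_le _)) hac hc
  rintro _ ⟨a, ha, rfl⟩ _ ⟨c, hc, rfl⟩ hne
  rcases lt_or_gt_of_ne (ne_of_apply_ne b hne) with h | h
  · exact key a c h hc
  · exact (key c a h ha).symm

theorem isClique_image_ge (hB : TwoBranch G b L R C l l') : G.IsClique (b '' {i | l ≤ i}) := by
  have key : ∀ a c : Fin p, l ≤ a → a < c → G.Adj (b a) (b c) := fun a c ha hac => by
    rcases hB.lNbr with h | h
    · exact absurd (ha.trans_lt hac) (by rw [Fin.lt_def]; omega)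
    · exact hB.isUmbrellaFamily.adj_of_le_of_lt_of_le h ha hac (Fin.le_def.2 (by simp; omega))
  rintro _ ⟨a, ha, rfl⟩ _ ⟨c, hc, rfl⟩ hne
  rcases lt_or_gt_of_ne (ne_of_apply_ne b hne) with h | h
  · exact key a c ha h
  · exact (key c a hc h).symm

theorem not_adj_of_notMem_range (hB : TwoBranch G b L R C l l') {v : V}
    (hv : v ∉ Set.range b) {x : V} (hx : x ∈ b '' {i | l' < i ∧ i < l}) : ¬ G.Adj v x := by
  obtain ⟨i, ⟨h₁, h₂⟩, rfl⟩ := hx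
  rcases hB.cover v hv with (hL | hR) | hC
  · exact hB.noLateL i h₁ v hL
  · exact hB.noEarlyR i h₂ v hR
  · exact hB.noBC v hC i

theorem exists_potential (hB : TwoBranch G b L R C l l') (hdec : KJoinDecomp G b l l' q e) :
    ∃ Ψ : V → ℕ, (∀ x ∈ b '' {i | i ≤ l'}, Ψ x = 0) ∧ (∀ x ∈ b '' {i | l ≤ i}, Ψ x = q - 2) ∧
      ∀ x ∈ Set.range b, ∀ y ∈ Set.range b, G.Adj x y → Ψ y ≤ Ψ x + 1 := by
  obtain ⟨ψ, h₁, h₂, h⟩ := hdec.exists_potential hB.isUmbrellaFamily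
  have : Nonempty (Fin p) := ⟨⟨0, hB.pos⟩⟩
  have hinv : ∀ a, Function.invFun b (b a) = a := Function.leftInverse_invFun hB.inj
  refine ⟨fun v => ψ (Function.invFun b v), ?_, ?_, ?_⟩
  · rintro _ ⟨a, ha, rfl⟩
    simp [hinv, h₁ a ha]
  · rintro _ ⟨a, ha, rfl⟩
    simpa [hinv] using h₂ a ha
  · rintro _ ⟨a, rfl⟩ _ ⟨c, rfl⟩ hac
    simpa [hinv] using h a c hac

theorem image_le_subset (hB : TwoBranch G b L R C l l') :
    b '' {i | i ≤ l'} ⊆ {v | v ∉ b '' {i | l' < i ∧ i < l}} := by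
  rintro _ ⟨a, ha, rfl⟩ ⟨a', ⟨h, -⟩, h'⟩
  exact (hB.inj h' ▸ h).not_ge ha

theorem image_ge_subset (hB : TwoBranch G b L R C l l') :
    b '' {i | l ≤ i} ⊆ {v | v ∉ b '' {i | l' < i ∧ i < l}} := by
  rintro _ ⟨a, ha, rfl⟩ ⟨a', ⟨-, h⟩, h'⟩
  exact (hB.inj h' ▸ h).not_ge ha

theorem notMem_range_of_isShortestWalkFromTo {c : ℕ → V} {r : ℕ}
    (hc : IsShortestWalkFromTo G {v | v ∉ b '' {i | l' < i ∧ i < l}} (b '' {i | i ≤ l'})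
      (b '' {i | l ≤ i}) c r) {j : ℕ} (hj₀ : 0 < j) (hj : j < r) : c j ∉ Set.range b := by
  intro hcj
  rcases mem_image_or_mem_image_or_mem_image hcj with h | h | h
  · exact hc.notMem_start hj₀ hj.le h
  · exact hc.1.mem j hj.le h
  · exact hc.notMem_end hj h

/-- Inner vertices in `B₁` or `B₂` are within one step of an end of `d`, and the others lie in
`B^R`, which has no neighbours outside the branch. -/
theorem eq_of_adj_inner_outer (hB : TwoBranch G b L R C l l') {c : ℕ → V} {r : ℕ}
    (hc : IsShortestWalkFromTo G {v | v ∉ b '' {i | l' < i ∧ i < l}} (b '' {i | i ≤ l'})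
      (b '' {i | l ≤ i}) c r)
    {d : ℕ → V} {s : ℕ} (hd : IsShortestWalkFromTo G (Set.range b) {c 0} {c r} d s)
    {i j : ℕ} (hi₀ : 0 < i) (hi : i < s) (hj₀ : 0 < j) (hj : j < r) (hadj : G.Adj (d i) (c j)) :
    (i = 1 ∧ j = 1 ∧ d 1 ∈ b '' {i | i ≤ l'}) ∨
      (i + 1 = s ∧ j + 1 = r ∧ d i ∈ b '' {i | l ≤ i}) := by
  have hd₀ : d 0 = c 0 := hd.1.start_mem
  have hds : d s = c r := hd.1.end_mem
  rcases mem_image_or_mem_image_or_mem_image (hd.1.mem i hi.le) with h | h | h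
  · have hi₁ := hd.le_one_of_isClique hB.isClique_image_le (hd₀ ▸ hc.1.start_mem) hi.le h
    obtain rfl : i = 1 := by omega
    have hj₁ : ¬ 2 ≤ j := fun hj₂ => hc.not_adj_start hj₂ hj.le h (hB.image_le_subset h) hadj.symm
    exact Or.inl ⟨rfl, by omega, h⟩
  · exact absurd hadj.symm (hB.not_adj_of_notMem_range
      (notMem_range_of_isShortestWalkFromTo hc hj₀ hj) h)
  · have hi₁ := hd.add_one_le_of_isClique hB.isClique_image_ge (hds ▸ hc.1.end_mem) hi.le h
    have hj₁ : ¬ j + 2 ≤ r := fun hj₂ => hc.not_adj_end hj₂ h (hB.image_ge_subset h) hadj.symm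
    exact Or.inr ⟨by omega, by omega, h⟩

theorem two_le_of_isWalkFromTo (hB : TwoBranch G b L R C l l') (hdec : KJoinDecomp G b l l' q e)
    (hq : 4 ≤ q) {U : Set V} {c : ℕ → V} {r : ℕ}
    (hc : IsWalkFromTo G U (b '' {i | i ≤ l'}) (b '' {i | l ≤ i}) c r) : 2 ≤ r := by
  obtain ⟨Ψ, hΨ₁, hΨ₂, hΨ⟩ := hB.exists_potential hdec
  have h₁ := hΨ₁ _ hc.start_mem
  have h₂ := hΨ₂ _ hc.end_mem
  by_contra! hr
  interval_cases r
  · omega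
  · have := hΨ _ (Set.image_subset_range _ _ hc.start_mem) _
      (Set.image_subset_range _ _ hc.end_mem) (hc.adj 0 zero_lt_one)
    omega

theorem sub_two_le_of_isWalkFromTo (hB : TwoBranch G b L R C l l')
    (hdec : KJoinDecomp G b l l' q e) {S T : Set V} {d : ℕ → V} {s : ℕ}
    (hd : IsWalkFromTo G (Set.range b) S T d s) {i j : ℕ} (hij : i ≤ j) (hj : j ≤ s)
    (hdi : d i ∈ b '' {i | i ≤ l'}) (hdj : d j ∈ b '' {i | l ≤ i}) : q - 2 ≤ j - i := by
  obtain ⟨Ψ, hΨ₁, hΨ₂, hΨ⟩ := hB.exists_potential hdec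
  have := hd.le_add_of_lipschitz hΨ hij hj
  rw [hΨ₁ _ hdi, hΨ₂ _ hdj] at this
  omega

/-- Each chord `s(d 1, c 1)` or `s(d (s - 1), c (r - 1))` comes with a step of the inner path `d`
inside `B₁` or `B₂`, which does not count towards the `q - 2` steps needed to cross the
K-joins. -/
theorem exists_chords (hB : TwoBranch G b L R C l l') (hdec : KJoinDecomp G b l l' q e)
    (hq : 4 ≤ q) {c : ℕ → V} {r : ℕ}
    (hc : IsShortestWalkFromTo G {v | v ∉ b '' {i | l' < i ∧ i < l}} (b '' {i | i ≤ l'})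
      (b '' {i | l ≤ i}) c r)
    {d : ℕ → V} {s : ℕ} (hd : IsShortestWalkFromTo G (Set.range b) {c 0} {c r} d s) :
    ∃ chords : Finset (Sym2 V), q + chords.card ≤ s + r ∧
      ∀ i j, 0 < i → i < s → 0 < j → j < r → G.Adj (d i) (c j) → s(d i, c j) ∈ chords := by
  classical
  have hd₀ : d 0 ∈ b '' {i | i ≤ l'} := hd.1.start_mem ▸ hc.1.start_mem
  have hds : d s ∈ b '' {i | l ≤ i} := hd.1.end_mem ▸ hc.1.end_mem
  have hs := hB.sub_two_le_of_isWalkFromTo hdec hd.1 (Nat.zero_le s) le_rfl hd₀ hds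
  have hr := hB.two_le_of_isWalkFromTo hdec hq hc.1
  refine ⟨(if d 1 ∈ b '' {i | i ≤ l'} then {s(d 1, c 1)} else ∅) ∪
    (if d (s - 1) ∈ b '' {i | l ≤ i} then {s(d (s - 1), c (r - 1))} else ∅), ?_,
    fun i j hi₀ hi hj₀ hj h => ?_⟩
  · have hcard := card_union_le (if d 1 ∈ b '' {i | i ≤ l'} then {s(d 1, c 1)} else ∅)
      (if d (s - 1) ∈ b '' {i | l ≤ i} then {s(d (s - 1), c (r - 1))} else ∅)
    split_ifs at hcard ⊢ with h₁ h₂ h₂ <;> simp only [card_singleton, card_empty] at hcard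
    · have := hB.sub_two_le_of_isWalkFromTo hdec hd.1 (by omega) (by omega) h₁ h₂; omega
    · have := hB.sub_two_le_of_isWalkFromTo hdec hd.1 (by omega) le_rfl h₁ hds; omega
    · have := hB.sub_two_le_of_isWalkFromTo hdec hd.1 (Nat.zero_le _) (by omega) hd₀ h₂; omega
    · omega
  · rcases hB.eq_of_adj_inner_outer hc hd hi₀ hi hj₀ hj h with ⟨rfl, rfl, h'⟩ | ⟨h₁, h₂, h'⟩
    · simp [h']
    · obtain rfl : i = s - 1 := by omega
      obtain rfl : j = r - 1 := by omega
      simp [h']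

theorem exists_cycle (hB : TwoBranch G b L R C l l') (hdec : KJoinDecomp G b l l' q e)
    (hq : 4 ≤ q)
    (hpath : ∃ c r, IsWalkFromTo G {v | v ∉ b '' {i | l' < i ∧ i < l}} (b '' {i | i ≤ l'})
      (b '' {i | l ≤ i}) c r) :
    ∃ (z : ℕ → V) (t : ℕ) (chords : Finset (Sym2 V)), IsCycleSeq G z t ∧ 3 ≤ t ∧
      q + chords.card ≤ t ∧ ∀ i < t, ∀ j < t, G.Adj (z i) (z j) →
        IsCycleEdge z t s(z i, z j) ∨ s(z i, z j) ∈ chords := by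
  obtain ⟨c, r, hc⟩ := exists_isShortestWalkFromTo hpath
  obtain ⟨d, s, hd⟩ : ∃ d s, IsShortestWalkFromTo G (Set.range b) {c 0} {c r} d s :=
    exists_isShortestWalkFromTo (exists_isWalkFromTo_of_reachable
      (hB.connB.preconnected ⟨c 0, Set.image_subset_range _ _ hc.1.start_mem⟩
        ⟨c r, Set.image_subset_range _ _ hc.1.end_mem⟩) rfl rfl)
  obtain ⟨chords, hlen, hcross⟩ := hB.exists_chords hdec hq hc hd
  have hd₀ : d 0 = c 0 := hd.1.start_mem
  have hds : d s = c r := hd.1.end_mem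
  refine ⟨appendReverse d s c r, s + r, chords,
    hd.isInducedPath.isCycleSeq_appendReverse hc.isInducedPath hd₀ hds fun i hi j hj₀ hj h => ?_,
    by omega, hlen,
    fun i hi j hj h => hd.isInducedPath.adj_appendReverse hc.isInducedPath hd₀ hds hcross hi hj h⟩
  exact notMem_range_of_isShortestWalkFromTo hc hj₀ hj (h ▸ hd.1.mem i hi)

end TwoBranch

theorem two_branch_no_completion_general (G : SimpleGraph V) (k p : ℕ)
    (b : Fin p → V) (L R C : Set V) (l l' : Fin p)
    (hB : TwoBranch G b L R C l l')
    (q : ℕ) (e : Fin q → Fin p)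
    (hdec : KJoinDecomp G b l l' q e) (hq : k + 4 ≤ q)
    (hsame : ∃ (x y : V)
      (hx : x ∈ {v : V | v ∉ b '' {i : Fin p | l' < i ∧ i < l}})
      (hy : y ∈ {v : V | v ∉ b '' {i : Fin p | l' < i ∧ i < l}}),
      x ∈ b '' {i : Fin p | i ≤ l'} ∧ y ∈ b '' {i : Fin p | l ≤ i} ∧
      (G.induce {v : V | v ∉ b '' {i : Fin p | l' < i ∧ i < l}}).Reachable
        ⟨x, hx⟩ ⟨y, hy⟩) :
    ¬ ∃ F : Finset (Sym2 V), IsKCompletion G k F := by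
  rintro ⟨F, ⟨-, -, hPI⟩, hF⟩
  obtain ⟨x, y, hx, hy, hxB, hyB, hxy⟩ := hsame
  obtain ⟨z, t, chords, hz, ht, hlen, hchords⟩ :=
    hB.exists_cycle hdec (by omega) (exists_isWalkFromTo_of_reachable hxy hxB hyB)
  have := hz.sub_three_le_card_add_card hPI ht hchords
  omega

/-- If a 2-branch has at least `k + 4` K-joins in its K-join decomposition
and its two attachment cliques lie in the same connected component of
`G[V ∖ B^R]`, then `G` has no `k`-completion. -/
theorem two_branch_no_completion [Fintype V] (G : SimpleGraph V) (k p : ℕ)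
    (b : Fin p → V) (L R C : Set V) (l l' : Fin p)
    (hB : TwoBranch G b L R C l l')
    (q : ℕ) (e : Fin q → Fin p)
    (hdec : KJoinDecomp G b l l' q e) (hq : k + 4 ≤ q)
    (hsame : ∃ (x y : V)
      (hx : x ∈ {v : V | v ∉ b '' {i : Fin p | l' < i ∧ i < l}})
      (hy : y ∈ {v : V | v ∉ b '' {i : Fin p | l' < i ∧ i < l}}),
      x ∈ b '' {i : Fin p | i ≤ l'} ∧ y ∈ b '' {i : Fin p | l ≤ i} ∧
      (G.induce {v : V | v ∉ b '' {i : Fin p | l' < i ∧ i < l}}).Reachable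
        ⟨x, hx⟩ ⟨y, hy⟩) :
    ¬ ∃ F : Finset (Sym2 V), IsKCompletion G k F :=
  two_branch_no_completion_general G k p b L R C l l' hB q e hdec hq hsame
end

section
/- Let G = (V,E) be a finite simple graph and B a 2-branch of G with umbrella ordering σ_B and with B^R ≠ ∅, and let x be a vertex of B^R. Then every K-join B' of G that contains x and is maximal under inclusion among K-joins containing x satisfies B' = {w ∈ B : u ≤_{σ_B} w ≤_{σ_B} v} for some extremal edge uv of σ_B. -/
/-!
A `K`-join is a clique, so a `K`-join containing `x ∈ B^R` consists of `x` and neighbours of `x`,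
all of which lie in `B`; it is therefore contained in the interval `[u, v]` of `σ_B` between its
first and last vertex, and `b_u b_v` is an edge. Conversely, for every edge `b_u b_v` of `σ_B` with
`u < l` and `l' < v`, the interval `[u, v]` is a clique by the umbrella property and a `K`-join:
its partial neighbours in `L` or before `u` form the left side, those in `R` or after `v` the
right side. Maximality then gives `B' = [u, v]` and rules out every edge enclosing `[u, v]`;
`u = v` is impossible since `B` is connected, so `x` has a neighbour in `B`.
-/

open SimpleGraph Finset

variable {V : Type*}

/-- The vertices that a `K`-join `B` must place in its sides `L` and `R`. -/
def IsPartialNeighbor (G : SimpleGraph V) (B : Set V) (w : V) : Prop :=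
  w ∉ B ∧ (∃ y ∈ B, G.Adj w y) ∧ ∃ y ∈ B, ¬ G.Adj w y

theorem IsKJoin.isClique {G : SimpleGraph V} {B : Set V} (h : IsKJoin G B) : G.IsClique B := by
  obtain ⟨p, b, N, L, R, C, rfl, hK⟩ := h
  rintro _ ⟨i, rfl⟩ _ ⟨j, rfl⟩ hne
  exact hK.clique i j (ne_of_apply_ne b hne)

/-- Only the sides of a `K`-join need to be chosen: `N` and `C` are forced to be the full
neighbours and the non-neighbours of the clique. -/
theorem isKJoin_range_of_sides {G : SimpleGraph V} {q : ℕ} {c : Fin q → V} (L₀ R₀ : Set V)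
    (hq : 0 < q) (hinj : Function.Injective c) (hclique : G.IsClique (Set.range c))
    (hdisj : Disjoint L₀ R₀)
    (hcover : ∀ w, IsPartialNeighbor G (Set.range c) w → w ∈ L₀ ∪ R₀)
    (hRfirst : ∀ r ∈ R₀, IsPartialNeighbor G (Set.range c) r →
      ∀ i : Fin q, i.val = 0 → ¬ G.Adj r (c i))
    (hLlast : ∀ w ∈ L₀, IsPartialNeighbor G (Set.range c) w →
      ∀ i : Fin q, i.val = q - 1 → ¬ G.Adj w (c i))
    (hRmono : ∀ i j : Fin q, i.val + 1 = j.val → ∀ r ∈ R₀, G.Adj (c i) r → G.Adj (c j) r)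
    (hLmono : ∀ i j : Fin q, i.val + 1 = j.val → ∀ w ∈ L₀, G.Adj (c j) w → G.Adj (c i) w) :
    IsKJoin G (Set.range c) := by
  set P := IsPartialNeighbor G (Set.range c)
  refine ⟨q, c, {w | w ∉ Set.range c ∧ ∀ i, G.Adj w (c i)}, L₀ ∩ {w | P w}, R₀ ∩ {w | P w},
    {w | w ∉ Set.range c ∧ ∀ i, ¬ G.Adj w (c i)}, rfl, ?_⟩
  have hex : ∀ {Q : V → Prop}, (∃ y ∈ Set.range c, Q y) ↔ ∃ i, Q (c i) := by simp
  constructor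
  · exact hinj
  · exact fun i j hij => hclique ⟨i, rfl⟩ ⟨j, rfl⟩ (hinj.ne hij)
  · intro w hw
    by_cases hall : ∀ i, G.Adj w (c i)
    · exact .inl (.inl (.inl ⟨hw, hall⟩))
    by_cases hnone : ∀ i, ¬ G.Adj w (c i)
    · exact .inr ⟨hw, hnone⟩
    push Not at hall hnone
    have hP : P w := ⟨hw, hex.2 hnone, hex.2 hall⟩
    rcases hcover w hP with hL | hR
    exacts [.inl (.inl (.inr ⟨hL, hP⟩)), .inl (.inr ⟨hR, hP⟩)]
  · simp only [List.pairwise_cons, List.mem_cons, List.not_mem_nil, or_false, forall_eq_or_imp,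
      forall_eq, List.Pairwise.nil, and_true, Set.disjoint_left, false_implies, implies_true]
    refine ⟨⟨fun w hw hN => hN.1 hw, fun w hw hL => hL.2.1 hw, fun w hw hR => hR.2.1 hw,
      fun w hw hC => hC.1 hw⟩, ⟨?_, ?_, fun w hN hC => hC.2 ⟨0, hq⟩ (hN.2 ⟨0, hq⟩)⟩,
      ⟨fun w hL hR => Set.disjoint_left.1 hdisj hL.1 hR.1, ?_⟩, ?_⟩
    · rintro w hN ⟨-, -, -, _, ⟨i, rfl⟩, hi⟩; exact hi (hN.2 i)
    · rintro w hN ⟨-, -, -, _, ⟨i, rfl⟩, hi⟩; exact hi (hN.2 i)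
    · rintro w ⟨-, -, ⟨_, ⟨i, rfl⟩, hi⟩, -⟩ hC; exact hC.2 i hi
    · rintro w ⟨-, -, ⟨_, ⟨i, rfl⟩, hi⟩, -⟩ hC; exact hC.2 i hi
  · exact fun w hw => hw.2
  · exact fun w hw => hw.2
  · rintro w (⟨-, -, hadj, -⟩ | ⟨-, -, hadj, -⟩) <;> exact hex.1 hadj
  · rintro w (⟨-, -, -, hnadj⟩ | ⟨-, -, -, hnadj⟩) <;> exact hex.1 hnadj
  · exact fun r hr => hRfirst r hr.1 hr.2
  · exact fun w hw => hLlast w hw.1 hw.2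
  · exact fun i j hij r hr => hRmono i j hij r hr.1
  · exact fun i j hij w hw => hLmono i j hij w hw.1

theorem isKJoin_image_Icc_of_sides {G : SimpleGraph V} {p : ℕ} {b : Fin p → V} {u v : Fin p}
    (L₀ R₀ : Set V) (hinj : Function.Injective b) (huv : u ≤ v)
    (hclique : G.IsClique (b '' Set.Icc u v)) (hdisj : Disjoint L₀ R₀)
    (hcover : ∀ w, IsPartialNeighbor G (b '' Set.Icc u v) w → w ∈ L₀ ∪ R₀)
    (hRfirst : ∀ r ∈ R₀, IsPartialNeighbor G (b '' Set.Icc u v) r → ¬ G.Adj r (b u))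
    (hLlast : ∀ w ∈ L₀, IsPartialNeighbor G (b '' Set.Icc u v) w → ¬ G.Adj w (b v))
    (hRmono : ∀ i j : Fin p, u ≤ i → j ≤ v → i.val + 1 = j.val →
      ∀ r ∈ R₀, G.Adj (b i) r → G.Adj (b j) r)
    (hLmono : ∀ i j : Fin p, u ≤ i → j ≤ v → i.val + 1 = j.val →
      ∀ w ∈ L₀, G.Adj (b j) w → G.Adj (b i) w) :
    IsKJoin G (b '' Set.Icc u v) := by
  have huv' : u.val ≤ v.val := huv
  set e : Fin (v.val - u.val + 1) → Fin p := fun k => ⟨u.val + k.val, by omega⟩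
  have he_val (k) : (e k).val = u.val + k.val := rfl
  have he_mem (k) : u ≤ e k ∧ e k ≤ v := by
    simp only [Fin.le_def, he_val]; omega
  have he_inj : Function.Injective e := fun k k' h =>
    Fin.ext (by simpa [he_val] using congrArg Fin.val h)
  have hrange : Set.range (b ∘ e) = b '' Set.Icc u v := by
    rw [Set.range_comp]
    congr 1
    ext i
    refine ⟨fun ⟨k, hk⟩ => hk ▸ he_mem k, fun ⟨hui, hiv⟩ => ⟨⟨i.val - u.val, ?_⟩, Fin.ext ?_⟩⟩
    · have : i.val ≤ v.val := hiv; omega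
    · have : u.val ≤ i.val := hui; simp only [he_val]; omega
  rw [← hrange] at hclique hcover hRfirst hLlast ⊢
  refine isKJoin_range_of_sides L₀ R₀ (Nat.succ_pos _) (hinj.comp he_inj) hclique hdisj hcover
    ?_ ?_ ?_ ?_
  · intro r hr hP k hk
    have hek : e k = u := Fin.ext (by rw [he_val, hk, add_zero])
    simpa [hek] using hRfirst r hr hP
  · intro w hw hP k hk
    have hek : e k = v := Fin.ext (by rw [he_val, hk]; omega)
    simpa [hek] using hLlast w hw hP
  · intro i j hij
    exact hRmono (e i) (e j) (he_mem i).1 (he_mem j).2 (by rw [he_val, he_val]; omega)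
  · intro i j hij
    exact hLmono (e i) (e j) (he_mem i).1 (he_mem j).2 (by rw [he_val, he_val]; omega)

def IsUmbrellaEnum {ι : Type*} [Preorder ι] (G : SimpleGraph V) (b : ι → V) : Prop :=
  ∀ i j m : ι, i < j → j < m → G.Adj (b i) (b m) → G.Adj (b i) (b j) ∧ G.Adj (b j) (b m)

namespace IsUmbrellaEnum

variable {ι : Type*} {G : SimpleGraph V} {b : ι → V}

theorem adj_shrink_right [PartialOrder ι] (hU : IsUmbrellaEnum G b) {m i v : ι} (hmi : m < i)
    (hiv : i ≤ v) (hadj : G.Adj (b m) (b v)) : G.Adj (b m) (b i) := by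
  rcases hiv.eq_or_lt with rfl | hiv
  exacts [hadj, (hU m i v hmi hiv hadj).1]

theorem adj_shrink_left [PartialOrder ι] (hU : IsUmbrellaEnum G b) {u i m : ι} (hui : u ≤ i)
    (him : i < m) (hadj : G.Adj (b u) (b m)) : G.Adj (b i) (b m) := by
  rcases hui.eq_or_lt with rfl | hui
  exacts [hadj, (hU u i m hui him hadj).2]

theorem isClique_image_Icc [LinearOrder ι] (hU : IsUmbrellaEnum G b) {u v : ι}
    (hadj : G.Adj (b u) (b v)) : G.IsClique (b '' Set.Icc u v) := by
  have hlt : ∀ i j, u ≤ i → i < j → j ≤ v → G.Adj (b i) (b j) := fun i j hui hij hjv =>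
    hU.adj_shrink_right hij hjv (hU.adj_shrink_left hui (hij.trans_le hjv) hadj)
  rintro _ ⟨i, ⟨hui, hiv⟩, rfl⟩ _ ⟨j, ⟨huj, hjv⟩, rfl⟩ hne
  rcases lt_or_gt_of_ne (ne_of_apply_ne b hne) with hij | hji
  exacts [hlt i j hui hij hjv, (hlt j i huj hji hiv).symm]

end IsUmbrellaEnum

namespace TwoBranch

variable {G : SimpleGraph V} {p : ℕ} {b : Fin p → V} {L R C : Set V} {l l' : Fin p}

theorem isUmbrellaEnum (hB : TwoBranch G b L R C l l') : IsUmbrellaEnum G b := hB.umbrella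

theorem disjoint_sides (hB : TwoBranch G b L R C l l') :
    Disjoint (Set.range b) L ∧ Disjoint (Set.range b) R ∧ Disjoint L R := by
  have h := hB.disj
  simp only [List.pairwise_cons, List.mem_cons, List.not_mem_nil, or_false, forall_eq_or_imp,
    forall_eq] at h
  exact ⟨h.1.1, h.1.2.1, h.2.1.1⟩

theorem mem_range_of_adj (hB : TwoBranch G b L R C l l') {x : Fin p} (hx1 : l' < x) (hx2 : x < l)
    {w : V} (hadj : G.Adj w (b x)) : w ∈ Set.range b := by
  by_contra hw
  rcases hB.cover w hw with (hwL | hwR) | hwC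
  · exact hB.noLateL x hx1 w hwL hadj
  · exact hB.noEarlyR x hx2 w hwR hadj
  · exact hB.noBC w hwC x hadj

theorem subset_range_of_isClique (hB : TwoBranch G b L R C l l') {x : Fin p} (hx1 : l' < x)
    (hx2 : x < l) {K : Set V} (hK : G.IsClique K) (hxK : b x ∈ K) : K ⊆ Set.range b := by
  intro w hw
  rcases eq_or_ne w (b x) with rfl | hwx
  exacts [⟨x, rfl⟩, hB.mem_range_of_adj hx1 hx2 (hK hw hxK hwx)]

theorem exists_edge_around (hB : TwoBranch G b L R C l l') {x y : Fin p} (hxy : x ≠ y) :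
    ∃ u v, u ≤ x ∧ x ≤ v ∧ u < v ∧ G.Adj (b u) (b v) := by
  have : Nontrivial (Set.range b) :=
    nontrivial_of_ne ⟨b x, x, rfl⟩ ⟨b y, y, rfl⟩ (fun h => hB.inj.ne hxy (congrArg Subtype.val h))
  obtain ⟨⟨_, z, rfl⟩, hz⟩ := hB.connB.preconnected.exists_adj_of_nontrivial ⟨b x, x, rfl⟩
  rw [comap_adj, Function.Embedding.subtype_apply, Function.Embedding.subtype_apply] at hz
  rcases lt_or_gt_of_ne (ne_of_apply_ne b hz.ne) with hxz | hzx
  exacts [⟨x, z, le_rfl, hxz.le, hxz, hz⟩, ⟨z, x, hzx.le, le_rfl, hzx, hz.symm⟩]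

theorem isKJoin_image_Icc (hB : TwoBranch G b L R C l l') {u v : Fin p} (hul : u < l)
    (hl'v : l' < v) (huv : u ≤ v) (hadj : G.Adj (b u) (b v)) :
    IsKJoin G (b '' Set.Icc u v) := by
  have hU := hB.isUmbrellaEnum
  obtain ⟨hBL, hBR, hLR⟩ := hB.disjoint_sides
  have hmissing : ∀ w, IsPartialNeighbor G (b '' Set.Icc u v) w →
      ∃ i ∈ Set.Icc u v, ¬ G.Adj w (b i) := by
    rintro w ⟨-, -, _, ⟨i, hi, rfl⟩, hwi⟩
    exact ⟨i, hi, hwi⟩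
  refine isKJoin_image_Icc_of_sides (L ∪ b '' Set.Iio u) (R ∪ b '' Set.Ioi v) hB.inj huv
    (hU.isClique_image_Icc hadj) ?_ ?_ ?_ ?_ ?_ ?_
  · have hIio : Disjoint (Set.Iio u) (Set.Ioi v) :=
      (Set.Iic_disjoint_Ioi huv).mono_left Set.Iio_subset_Iic_self
    simp only [Set.disjoint_union_left, Set.disjoint_union_right]
    exact ⟨⟨hLR, hBR.mono_left (Set.image_subset_range _ _)⟩,
      ⟨(hBL.mono_left (Set.image_subset_range _ _)).symm, (Set.disjoint_image_iff hB.inj).2 hIio⟩⟩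
  · rintro w ⟨hwI, ⟨_, ⟨i, -, rfl⟩, hwi⟩, -⟩
    by_cases hw : w ∈ Set.range b
    · obtain ⟨m, rfl⟩ := hw
      rw [hB.inj.mem_set_image, Set.mem_Icc, not_and_or, not_le, not_le] at hwI
      rcases hwI with hmu | hvm
      exacts [.inl (.inr ⟨m, hmu, rfl⟩), .inr (.inr ⟨m, hvm, rfl⟩)]
    rcases hB.cover w hw with (hwL | hwR) | hwC
    exacts [.inl (.inl hwL), .inr (.inl hwR), (hB.noBC w hwC i hwi).elim]
  · rintro r (hr | ⟨m, hvm, rfl⟩) hP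
    · exact hB.noEarlyR u hul r hr
    · obtain ⟨i, ⟨hui, hiv⟩, hmi⟩ := hmissing _ hP
      exact fun hmu => hmi (hU.adj_shrink_left hui (hiv.trans_lt hvm) hmu.symm).symm
  · rintro w (hw | ⟨m, hmu, rfl⟩) hP
    · exact hB.noLateL v hl'v w hw
    · obtain ⟨i, ⟨hui, hiv⟩, hmi⟩ := hmissing _ hP
      exact fun hmv => hmi (hU.adj_shrink_right (hmu.trans_le hui) hiv hmv)
  · rintro i j - hjv hij r (hr | ⟨m, hvm, rfl⟩) hir
    · have hli : l ≤ i := not_lt.1 fun hil => hB.noEarlyR i hil r hr hir.symm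
      exact hB.rMono i j hli hij r hr hir
    · exact (hU i j m (Fin.lt_def.2 (by omega)) (hjv.trans_lt hvm) hir).2
  · rintro i j hui - hij w (hw | ⟨m, hmu, rfl⟩) hjw
    · have hjl : j ≤ l' := not_lt.1 fun hl'j => hB.noLateL j hl'j w hw hjw.symm
      exact hB.lMono i j hjl hij w hw hjw
    · exact (hU m i j (hmu.trans_le hui) (Fin.lt_def.2 (by omega)) hjw.symm).1.symm

end TwoBranch

theorem exists_subset_image_Icc {ι : Type*} [LinearOrder ι] [Finite ι] {b : ι → V} {B : Set V}
    (hB : B ⊆ Set.range b) {x : ι} (hx : b x ∈ B) :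
    ∃ u v, u ≤ x ∧ x ≤ v ∧ b u ∈ B ∧ b v ∈ B ∧ B ⊆ b '' Set.Icc u v := by
  obtain ⟨u, hu, hmin⟩ := Set.exists_min_image (b ⁻¹' B) id (Set.toFinite _) ⟨x, hx⟩
  obtain ⟨v, hv, hmax⟩ := Set.exists_max_image (b ⁻¹' B) id (Set.toFinite _) ⟨x, hx⟩
  refine ⟨u, v, hmin x hx, hmax x hx, hu, hv, fun w hw => ?_⟩
  obtain ⟨i, rfl⟩ := hB hw
  exact ⟨i, ⟨hmin i hw, hmax i hw⟩, rfl⟩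

theorem max_kjoin_in_two_branch_general (G : SimpleGraph V) (p : ℕ)
    (b : Fin p → V) (L R C : Set V) (l l' : Fin p)
    (hB : TwoBranch G b L R C l l')
    (x : Fin p) (hx1 : l' < x) (hx2 : x < l)
    (B' : Set V) (hB' : IsKJoin G B') (hxB' : b x ∈ B')
    (hmax : ∀ B'' : Set V, IsKJoin G B'' → b x ∈ B'' → B' ⊆ B'' → B' = B'') :
    ∃ u v : Fin p, u < v ∧ G.Adj (b u) (b v) ∧
      (∀ u' v' : Fin p, G.Adj (b u') (b v') → u' ≤ u → v ≤ v' →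
        u' = u ∧ v' = v) ∧
      B' = b '' {w : Fin p | u ≤ w ∧ w ≤ v} := by
  obtain ⟨u, v, hux, hxv, hu, hv, hB'uv⟩ :=
    exists_subset_image_Icc (hB.subset_range_of_isClique hx1 hx2 hB'.isClique hxB') hxB'
  have hmax_Icc : ∀ u' v', u' ≤ u → v ≤ v' → G.Adj (b u') (b v') → B' = b '' Set.Icc u' v' :=
    fun u' v' hu' hv' hadj => hmax _
      (hB.isKJoin_image_Icc ((hu'.trans hux).trans_lt hx2) (hx1.trans_le (hxv.trans hv'))
        (hu'.trans ((hux.trans hxv).trans hv')) hadj)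
      ⟨x, ⟨hu'.trans hux, hxv.trans hv'⟩, rfl⟩
      (hB'uv.trans (Set.image_mono (Set.Icc_subset_Icc hu' hv')))
  -- an edge enclosing `[u, v]` spans a `K`-join containing `B'`, so by maximality it is `B'`
  have hinner : ∀ u' v', u' ≤ u → v ≤ v' → G.Adj (b u') (b v') → u ≤ u' ∧ v' ≤ v := by
    intro u' v' hu' hv' hadj
    have huv' : u' ≤ v' := (hu'.trans (hux.trans hxv)).trans hv'
    have hB'eq := hmax_Icc u' v' hu' hv' hadj
    exact ⟨(hB.inj.mem_set_image.1 (hB'uv (hB'eq ▸ ⟨u', ⟨le_rfl, huv'⟩, rfl⟩))).1,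
      (hB.inj.mem_set_image.1 (hB'uv (hB'eq ▸ ⟨v', ⟨huv', le_rfl⟩, rfl⟩))).2⟩
  have huv : u < v := by
    by_contra! hvu
    obtain ⟨u', v', hu'x, hxv', hu'v', hadj⟩ := hB.exists_edge_around hx1.ne'
    have := hinner u' v' (hu'x.trans (hxv.trans hvu)) ((hvu.trans hux).trans hxv') hadj
    exact hu'v'.not_ge ((this.2.trans hvu).trans this.1)
  have hadj : G.Adj (b u) (b v) := hB'.isClique hu hv (hB.inj.ne huv.ne)
  refine ⟨u, v, huv, hadj, fun u' v' hadj' hu' hv' => ?_, hmax_Icc u v le_rfl le_rfl hadj⟩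
  have := hinner u' v' hu' hv' hadj'
  exact ⟨le_antisymm hu' this.1, le_antisymm this.2 hv'⟩

/-- In a 2-branch with `B^R ≠ ∅` and `x ∈ B^R`, every inclusion-maximal
`K`-join of `G` containing `x` is the interval of the umbrella ordering of
`B` determined by some extremal edge of `σ_B`. -/
theorem max_kjoin_in_two_branch [Fintype V] (G : SimpleGraph V) (p : ℕ)
    (b : Fin p → V) (L R C : Set V) (l l' : Fin p)
    (hB : TwoBranch G b L R C l l')
    (x : Fin p) (hx1 : l' < x) (hx2 : x < l)
    (B' : Set V) (hB' : IsKJoin G B') (hxB' : b x ∈ B')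
    (hmax : ∀ B'' : Set V, IsKJoin G B'' → b x ∈ B'' → B' ⊆ B'' → B' = B'') :
    ∃ u v : Fin p, u < v ∧ G.Adj (b u) (b v) ∧
      (∀ u' v' : Fin p, G.Adj (b u') (b v') → u' ≤ u → v ≤ v' →
        u' = u ∧ v' = v) ∧
      B' = b '' {w : Fin p | u ≤ w ∧ w ≤ v} :=
  max_kjoin_in_two_branch_general G p b L R C l l' hB x hx1 hx2 B' hB' hxB' hmax
end

section
/- Let G = (V,E) be a finite simple graph, k a positive integer, and u, v two nonadjacent vertices of G. Suppose there exist m > k vertices w_1, …, w_m, pairwise distinct, such that each {u, v, w_i} is an independent set of size 3 in G. Then every bcc-k-completion F of G contains the pair uv. -/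
open SimpleGraph Finset

variable {V : Type*}

/-- A bi-clique chain graph has no independent set of size 3. -/
lemma biclique_no_ind3 {G : SimpleGraph V} (h : IsBicliqueChain G) :
    ∀ a b c : V, ¬ IsInd3 G a b c := by
  obtain ⟨q, x, Y, hinj, _, hcov, hx, hY, _⟩ := h
  have key : ∀ a b : V, a ∈ Set.range x → b ∈ Set.range x → a ≠ b → G.Adj a b := by
    rintro a b ⟨i, rfl⟩ ⟨j, rfl⟩ hne
    exact hx i j (fun hij => hne (by rw [hij]))
  rintro a b c ⟨hab, hac, hbc, nab, nac, nbc⟩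
  rcases hcov a with ha | ha <;> rcases hcov b with hb | hb <;>
    rcases hcov c with hc | hc
  · exact nab (key a b ha hb hab)
  · exact nab (key a b ha hb hab)
  · exact nac (key a c ha hc hac)
  · exact nbc (hY hb hc hbc)
  · exact nbc (key b c hb hc hbc)
  · exact nac (hY ha hc hac)
  · exact nab (hY ha hb hab)
  · exact nab (hY ha hb hab)

/-- Sunflower rule for `3K₁`'s: if more than `k` pairwise distinct vertices
`w` form an independent triple with the nonadjacent pair `u, v`, then every
bcc-`k`-completion of `G` contains the pair `uv`. -/
theorem bcc_sunflower_ind3 [Fintype V] (G : SimpleGraph V) (k : ℕ)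
    (hk : 0 < k) (u v : V) (hne : u ≠ v) (huv : ¬ G.Adj u v)
    (W : Finset V) (hW : k < W.card)
    (hind : ∀ w ∈ W, IsInd3 G u v w) :
    ∀ F : Finset (Sym2 V), IsBccKCompletion G k F → s(u, v) ∈ F := by
  intro F ⟨_, _, hcard, hbcc⟩
  classical
  by_contra huvF
  -- In `G + F`, `u` and `v` remain nonadjacent.
  have hGF : ¬ (addEdges G F).Adj u v := by
    simp only [addEdges, SimpleGraph.sup_adj, SimpleGraph.fromEdgeSet_adj,
      Finset.mem_coe] at *
    push_neg
    exact ⟨huv, fun h => absurd h huvF⟩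
  -- For each `w ∈ W`, one of `s(u,w)`, `s(v,w)` is in `F`.
  have hF : ∀ w ∈ W, s(u, w) ∈ F ∨ s(v, w) ∈ F := by
    intro w hw
    obtain ⟨_, huw, hvw, _, nuw, nvw⟩ := hind w hw
    by_contra hcon
    push_neg at hcon
    refine biclique_no_ind3 hbcc u v w ⟨hne, huw, hvw, hGF, ?_, ?_⟩
    · simp only [addEdges, SimpleGraph.sup_adj, SimpleGraph.fromEdgeSet_adj,
        Finset.mem_coe]
      push_neg
      exact ⟨nuw, fun h => absurd h hcon.1⟩
    · simp only [addEdges, SimpleGraph.sup_adj, SimpleGraph.fromEdgeSet_adj,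
        Finset.mem_coe]
      push_neg
      exact ⟨nvw, fun h => absurd h hcon.2⟩
  -- The map `w ↦` that edge is injective on `W`, giving `|F| ≥ |W| > k`.
  have hle : W.card ≤ F.card := by
    apply Finset.card_le_card_of_injOn
      (fun w => if s(u, w) ∈ F then s(u, w) else s(v, w))
    · intro w hw
      by_cases h : s(u, w) ∈ F
      · simpa [h]
      · have := (hF w hw).resolve_left h
        simpa [h]
    · intro w hw w' hw' heq
      obtain ⟨_, huw, hvw, _, _, _⟩ := hind w hw
      obtain ⟨_, huw', hvw', _, _, _⟩ := hind w' hw'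
      simp only [] at heq
      split_ifs at heq <;> rw [Sym2.eq_iff] at heq <;>
        rcases heq with ⟨h1, h2⟩ | ⟨h1, h2⟩ <;>
        first
          | exact h2
          | (exact absurd h1 huw') | (exact absurd h1 hvw')
          | (exact absurd h1 hne) | (exact absurd h1 hne.symm)
          | (exact absurd h2.symm huw) | (exact absurd h2.symm hvw)
          | (exact absurd h2 huw) | (exact absurd h2 hvw)
  omega
end

section
/- Let G = (V,E) be a finite simple graph admitting a bcc-k-completion, and suppose that for every pair of nonadjacent vertices u, v of G: at most k vertices w are such that {u, v, w} is an independent set of size 3, and at most k induced 4-cycles of G contain both u and v (as a nonadjacent pair). Then at most k^2 + 2k vertices of G belong to an independent set of size 3 of G, and at most 2k^2 + 2k vertices of G belong to an induced 4-cycle of G. -/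
open SimpleGraph Finset

variable {V : Type*}

private lemma ind3_cyc {G : SimpleGraph V} {x y z : V} (h : IsInd3 G x y z) :
    IsInd3 G y z x := by
  obtain ⟨h1, h2, h3, h4, h5, h6⟩ := h
  exact ⟨h3, h1.symm, h2.symm, h6, fun h => h4 h.symm, fun h => h5 h.symm⟩

private lemma ind3_swap {G : SimpleGraph V} {x y z : V} (h : IsInd3 G x y z) :
    IsInd3 G y x z := by
  obtain ⟨h1, h2, h3, h4, h5, h6⟩ := h
  exact ⟨h1.symm, h3, h2, fun h => h4 h.symm, h6, h5⟩

private lemma c4_rot {G : SimpleGraph V} {a b c d : V} :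
    IsInducedC4 G a b c d → IsInducedC4 G b c d a := by
  rintro ⟨h1, h2, h3, h4, h5, h6, h7, h8⟩
  exact ⟨h2, h3, h4, h1, h6, fun h => h5 h.symm, h8, h7.symm⟩

private lemma bcc_no_ind3 {H : SimpleGraph V} (h : IsBicliqueChain H)
    (x y z : V) : ¬ IsInd3 H x y z := by
  rintro ⟨hxy, hxz, hyz, nxy, nxz, nyz⟩
  obtain ⟨q, b, Y, hinj, -, hcov, hclq, hYclq, -⟩ := h
  have pair : ∀ u v : V, u ≠ v →
      (u ∈ Set.range b ∧ v ∈ Set.range b) ∨ (u ∈ Y ∧ v ∈ Y) → H.Adj u v := by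
    rintro u v huv (⟨⟨i, rfl⟩, ⟨j, rfl⟩⟩ | ⟨hu, hv⟩)
    · exact hclq i j (fun h => huv (by rw [h]))
    · exact hYclq hu hv huv
  rcases hcov x with hx | hx <;> rcases hcov y with hy | hy <;>
    rcases hcov z with hz | hz
  · exact nxy (pair x y hxy (Or.inl ⟨hx, hy⟩))
  · exact nxy (pair x y hxy (Or.inl ⟨hx, hy⟩))
  · exact nxz (pair x z hxz (Or.inl ⟨hx, hz⟩))
  · exact nyz (pair y z hyz (Or.inr ⟨hy, hz⟩))
  · exact nyz (pair y z hyz (Or.inl ⟨hy, hz⟩))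
  · exact nxz (pair x z hxz (Or.inr ⟨hx, hz⟩))
  · exact nxy (pair x y hxy (Or.inr ⟨hx, hy⟩))
  · exact nxy (pair x y hxy (Or.inr ⟨hx, hy⟩))

private lemma bcc_no_c4 {H : SimpleGraph V} (h : IsBicliqueChain H)
    (a b c d : V) : ¬ IsInducedC4 H a b c d := by
  obtain ⟨q, x, Y, hinj, hdisj, hcov, hclq, hYclq, hchain⟩ := h
  have split : ∀ u v : V, u ≠ v → ¬ H.Adj u v →
      (u ∈ Set.range x ∧ v ∈ Y) ∨ (u ∈ Y ∧ v ∈ Set.range x) := by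
    intro u v huv hn
    rcases hcov u with hu | hu <;> rcases hcov v with hv | hv
    · obtain ⟨i, rfl⟩ := hu; obtain ⟨j, rfl⟩ := hv
      exact absurd (hclq i j fun h => huv (by rw [h])) hn
    · exact Or.inl ⟨hu, hv⟩
    · exact Or.inr ⟨hu, hv⟩
    · exact absurd (hYclq hu hv huv) hn
  have core : ∀ (i : Fin q) (b c d : V), c ∈ Y →
      IsInducedC4 H (x i) b c d → False := by
    rintro i b c d hc ⟨h1, h2, h3, h4, h5, h6, h7, h8⟩
    rcases split b d h8 h6 with ⟨⟨j, rfl⟩, hd⟩ | ⟨hb, ⟨j, rfl⟩⟩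
    · rcases le_total i j with hij | hij
      · exact h6 (hchain i j hij d hd h4.symm)
      · exact h5 (hchain j i hij c hc h2)
    · rcases le_total i j with hij | hij
      · exact h6 (hchain i j hij b hb h1).symm
      · exact h5 (hchain j i hij c hc h3.symm)
  intro hC4
  rcases split a c hC4.2.2.2.2.2.2.1 hC4.2.2.2.2.1 with ⟨⟨i, rfl⟩, hc⟩ | ⟨ha, ⟨i, rfl⟩⟩
  · exact core i b c d hc hC4
  · exact core i d a b ha (c4_rot (c4_rot hC4))


/-- In a reduced positive instance of the bi-clique chain completion problem,
at most `k² + 2k` vertices belong to a `3K₁` and at most `2k² + 2k` vertices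
belong to an induced 4-cycle. -/
theorem bcc_few_ind3_and_c4 [Fintype V] (G : SimpleGraph V) (k : ℕ)
    (hpos : ∃ F : Finset (Sym2 V), IsBccKCompletion G k F)
    (hred : ∀ u v : V, u ≠ v → ¬ G.Adj u v →
      {w : V | IsInd3 G u v w}.ncard ≤ k ∧
      {e : Sym2 V | ∃ a b : V, e = s(a, b) ∧ IsInducedC4 G u a v b}.ncard ≤ k) :
    {x : V | InInd3 G x}.ncard ≤ k ^ 2 + 2 * k ∧
    {x : V | InC4 G x}.ncard ≤ 2 * k ^ 2 + 2 * k := by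
  classical
  obtain ⟨F, hdiag, hnedge, hcard, hbcc⟩ := hpos
  have hF : ∀ e ∈ F, ∃ u v : V, e = s(u, v) ∧ u ≠ v ∧ ¬ G.Adj u v := by
    intro e he
    obtain ⟨u, v⟩ := e
    refine ⟨u, v, rfl, ?_, ?_⟩
    · intro h; exact hdiag _ he (by simp [h])
    · intro h; exact hnedge _ he (by simpa using h)
  have hle : G ≤ addEdges G F := le_sup_left
  have hHadj : ∀ u v : V, ¬ G.Adj u v → s(u, v) ∉ F → ¬ (addEdges G F).Adj u v := by
    intro u v hg hf hadj
    simp only [addEdges, SimpleGraph.sup_adj, SimpleGraph.fromEdgeSet_adj,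
      Finset.mem_coe] at hadj
    rcases hadj with h | ⟨h, -⟩
    · exact hg h
    · exact hf h
  constructor
  · set S : Sym2 V → Finset V := fun e =>
      {x : V | ∃ u v : V, e = s(u, v) ∧ (x = u ∨ x = v ∨ IsInd3 G u v x)}.toFinset
      with hS
    have hmemS : ∀ (e : Sym2 V) (x : V),
        x ∈ S e ↔ ∃ u v : V, e = s(u, v) ∧ (x = u ∨ x = v ∨ IsInd3 G u v x) := by
      intro e x; rw [hS]; simp only [Set.mem_toFinset, Set.mem_setOf_eq]
    have hsub : {x : V | InInd3 G x}.toFinset ⊆ F.biUnion S := by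
      intro x hx
      rw [Set.mem_toFinset] at hx
      obtain ⟨y, z, h3⟩ := hx
      have key : s(x, y) ∈ F ∨ s(x, z) ∈ F ∨ s(y, z) ∈ F := by
        by_contra hc
        push_neg at hc
        obtain ⟨c1, c2, c3⟩ := hc
        exact bcc_no_ind3 hbcc x y z
          ⟨h3.1, h3.2.1, h3.2.2.1, hHadj _ _ h3.2.2.2.1 c1,
            hHadj _ _ h3.2.2.2.2.1 c2, hHadj _ _ h3.2.2.2.2.2 c3⟩
      rw [Finset.mem_biUnion]
      rcases key with h | h | h
      · exact ⟨_, h, (hmemS _ _).mpr ⟨x, y, rfl, Or.inl rfl⟩⟩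
      · exact ⟨_, h, (hmemS _ _).mpr ⟨x, z, rfl, Or.inl rfl⟩⟩
      · exact ⟨_, h, (hmemS _ _).mpr ⟨y, z, rfl, Or.inr (Or.inr (ind3_cyc h3))⟩⟩
    have hSe : ∀ e ∈ F, (S e).card ≤ k + 2 := by
      intro e he
      obtain ⟨u, v, rfl, hne, hnadj⟩ := hF e he
      have hsub2 : S s(u, v) ⊆ insert u (insert v {w : V | IsInd3 G u v w}.toFinset) := by
        intro x hx
        rw [hmemS] at hx
        obtain ⟨u', v', heq, hcase⟩ := hx
        rw [Sym2.eq_iff] at heq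
        simp only [Finset.mem_insert, Set.mem_toFinset, Set.mem_setOf_eq]
        rcases heq with ⟨rfl, rfl⟩ | ⟨rfl, rfl⟩
        · exact hcase
        · rcases hcase with h | h | h
          · exact Or.inr (Or.inl h)
          · exact Or.inl h
          · exact Or.inr (Or.inr (ind3_swap h))
      have hk : ({w : V | IsInd3 G u v w}.toFinset).card ≤ k := by
        rw [← Set.ncard_eq_toFinset_card']
        exact (hred u v hne hnadj).1
      calc (S s(u, v)).card ≤ (insert u (insert v {w : V | IsInd3 G u v w}.toFinset)).card :=
            Finset.card_le_card hsub2
        _ ≤ (insert v {w : V | IsInd3 G u v w}.toFinset).card + 1 :=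
            Finset.card_insert_le _ _
        _ ≤ ({w : V | IsInd3 G u v w}.toFinset).card + 1 + 1 :=
            Nat.add_le_add_right (Finset.card_insert_le _ _) 1
        _ ≤ k + 2 := by omega
    calc {x : V | InInd3 G x}.ncard = {x : V | InInd3 G x}.toFinset.card :=
          Set.ncard_eq_toFinset_card' _
      _ ≤ (F.biUnion S).card := Finset.card_le_card hsub
      _ ≤ ∑ e ∈ F, (S e).card := Finset.card_biUnion_le
      _ ≤ ∑ _e ∈ F, (k + 2) := Finset.sum_le_sum hSe
      _ = F.card * (k + 2) := by rw [Finset.sum_const, smul_eq_mul]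
      _ ≤ k * (k + 2) := Nat.mul_le_mul_right _ hcard
      _ = k ^ 2 + 2 * k := by ring
  · set S : Sym2 V → Finset V := fun e =>
      {x : V | ∃ u v : V, e = s(u, v) ∧
        (x = u ∨ x = v ∨ ∃ a b : V, IsInducedC4 G u a v b ∧ (x = a ∨ x = b))}.toFinset
      with hS
    have hmemS : ∀ (e : Sym2 V) (x : V),
        x ∈ S e ↔ ∃ u v : V, e = s(u, v) ∧
          (x = u ∨ x = v ∨ ∃ a b : V, IsInducedC4 G u a v b ∧ (x = a ∨ x = b)) := by
      intro e x; rw [hS]; simp only [Set.mem_toFinset, Set.mem_setOf_eq]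
    have hsub : {x : V | InC4 G x}.toFinset ⊆ F.biUnion S := by
      intro x hx
      rw [Set.mem_toFinset] at hx
      obtain ⟨a, b, c, d, h4, hx⟩ := hx
      have key : s(a, c) ∈ F ∨ s(b, d) ∈ F := by
        by_contra hc
        push_neg at hc
        obtain ⟨c1, c2⟩ := hc
        obtain ⟨h1, h2, h3, h4', h5, h6, h7, h8⟩ := h4
        exact bcc_no_c4 hbcc a b c d
          ⟨hle h1, hle h2, hle h3, hle h4', hHadj _ _ h5 c1, hHadj _ _ h6 c2, h7, h8⟩
      rw [Finset.mem_biUnion]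
      rcases key with h | h
      · refine ⟨_, h, (hmemS _ _).mpr ⟨a, c, rfl, ?_⟩⟩
        rcases hx with rfl | rfl | rfl | rfl
        · exact Or.inl rfl
        · exact Or.inr (Or.inr ⟨x, d, h4, Or.inl rfl⟩)
        · exact Or.inr (Or.inl rfl)
        · exact Or.inr (Or.inr ⟨b, x, h4, Or.inr rfl⟩)
      · refine ⟨_, h, (hmemS _ _).mpr ⟨b, d, rfl, ?_⟩⟩
        rcases hx with rfl | rfl | rfl | rfl
        · exact Or.inr (Or.inr ⟨c, x, c4_rot h4, Or.inr rfl⟩)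
        · exact Or.inl rfl
        · exact Or.inr (Or.inr ⟨x, a, c4_rot h4, Or.inl rfl⟩)
        · exact Or.inr (Or.inl rfl)
    have hSe : ∀ e ∈ F, (S e).card ≤ 2 * k + 2 := by
      intro e he
      obtain ⟨u, v, rfl, hne, hnadj⟩ := hF e he
      set T : Finset V :=
        {x : V | ∃ a b : V, IsInducedC4 G u a v b ∧ (x = a ∨ x = b)}.toFinset with hT
      have hsub2 : S s(u, v) ⊆ insert u (insert v T) := by
        intro x hx
        rw [hmemS] at hx
        obtain ⟨u', v', heq, hcase⟩ := hx
        rw [Sym2.eq_iff] at heq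
        simp only [Finset.mem_insert, hT, Set.mem_toFinset, Set.mem_setOf_eq]
        rcases heq with ⟨rfl, rfl⟩ | ⟨rfl, rfl⟩
        · exact hcase
        · rcases hcase with h | h | ⟨a, b, hc4, hab⟩
          · exact Or.inr (Or.inl h)
          · exact Or.inl h
          · exact Or.inr (Or.inr ⟨b, a, c4_rot (c4_rot hc4), hab.symm⟩)
      have hTcard : T.card ≤ 2 * k := by
        set E : Finset (Sym2 V) :=
          {e : Sym2 V | ∃ a b : V, e = s(a, b) ∧ IsInducedC4 G u a v b}.toFinset with hE
        have hEcard : E.card ≤ k := by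
          rw [hE, ← Set.ncard_eq_toFinset_card']
          exact (hred u v hne hnadj).2
        have hTsub : T ⊆ E.biUnion (fun e => {x : V | x ∈ e}.toFinset) := by
          intro x hx
          rw [hT, Set.mem_toFinset] at hx
          obtain ⟨a, b, hc4, hab⟩ := hx
          rw [Finset.mem_biUnion]
          refine ⟨s(a, b), ?_, ?_⟩
          · rw [hE, Set.mem_toFinset]; exact ⟨a, b, rfl, hc4⟩
          · rw [Set.mem_toFinset]
            simp only [Set.mem_setOf_eq, Sym2.mem_iff]
            exact hab
        calc T.card ≤ (E.biUnion (fun e => {x : V | x ∈ e}.toFinset)).card :=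
              Finset.card_le_card hTsub
          _ ≤ ∑ e ∈ E, ({x : V | x ∈ e}.toFinset).card := Finset.card_biUnion_le
          _ ≤ ∑ _e ∈ E, 2 := by
              refine Finset.sum_le_sum ?_
              intro e _
              obtain ⟨a, b⟩ := e
              have : {x : V | x ∈ s(a, b)}.toFinset ⊆ {a, b} := by
                intro x hx
                rw [Set.mem_toFinset] at hx
                simp only [Set.mem_setOf_eq, Sym2.mem_iff] at hx
                simp only [Finset.mem_insert, Finset.mem_singleton]
                exact hx
              calc ({x : V | x ∈ s(a, b)}.toFinset).card ≤ ({a, b} : Finset V).card :=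
                    Finset.card_le_card this
                _ ≤ 2 := Finset.card_insert_le _ _ |>.trans (by simp)
          _ = E.card * 2 := by rw [Finset.sum_const, smul_eq_mul]
          _ ≤ k * 2 := Nat.mul_le_mul_right _ hEcard
          _ = 2 * k := by ring
      calc (S s(u, v)).card ≤ (insert u (insert v T)).card := Finset.card_le_card hsub2
        _ ≤ (insert v T).card + 1 := Finset.card_insert_le _ _
        _ ≤ T.card + 1 + 1 := Nat.add_le_add_right (Finset.card_insert_le _ _) 1
        _ ≤ 2 * k + 2 := by omega
    calc {x : V | InC4 G x}.ncard = {x : V | InC4 G x}.toFinset.card :=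
          Set.ncard_eq_toFinset_card' _
      _ ≤ (F.biUnion S).card := Finset.card_le_card hsub
      _ ≤ ∑ e ∈ F, (S e).card := Finset.card_biUnion_le
      _ ≤ ∑ _e ∈ F, (2 * k + 2) := Finset.sum_le_sum hSe
      _ = F.card * (2 * k + 2) := by rw [Finset.sum_const, smul_eq_mul]
      _ ≤ k * (2 * k + 2) := Nat.mul_le_mul_right _ hcard
      _ = 2 * k ^ 2 + 2 * k := by ring
end
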